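/- arXiv:2502.09041 — 12 statements merged into one kernel-verified Lean document; each statement's English description precedes it below -/
import Mathlib

section
/- Let V be a real vector space and let P, Q : V → V be linear maps with P ∘ P = (1/2) · id and Q ∘ Q = Q. Define A := id − 2P − 4Q. If X ∈ V satisfies A X = −(1+√2) X, then Y := P X satisfies A Y = (√2 − 1) Y. -/
open scoped RealInnerProductSpace

/-- Let `V` be a real vector space and `P Q : V → V` linear with
`P ∘ P = (1/2) • id` and `Q ∘ Q = Q`. Set `A := id − 2P − 4Q`. If `A X = −(1+√2) X`,
then `Y := P X` satisfies `A Y = (√2 − 1) Y`. -/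
theorem stmt3 (V : Type*) [AddCommGroup V] [Module ℝ V]
    (P Q : V →ₗ[ℝ] V)
    (hP : P ∘ₗ P = (1 / 2 : ℝ) • (LinearMap.id : V →ₗ[ℝ] V))
    (hQ : Q ∘ₗ Q = Q)
    (A : V →ₗ[ℝ] V)
    (hA : A = LinearMap.id - (2 : ℝ) • P - (4 : ℝ) • Q)
    (X : V)
    (hX : A X = (-(1 + Real.sqrt 2)) • X) :
    A (P X) = (Real.sqrt 2 - 1) • P X := by
  set s : ℝ := Real.sqrt 2 with hsdef
  have hs : s * s = 2 := Real.mul_self_sqrt (by norm_num)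
  have hPP : P (P X) = (1 / 2 : ℝ) • X := by
    have := congrArg (fun f => f X) hP
    simpa using this
  subst hA
  simp only [LinearMap.sub_apply, LinearMap.smul_apply, LinearMap.id_apply] at hX ⊢
  have hQX : Q X = ((2 + s) / 4 : ℝ) • X - (1 / 2 : ℝ) • (P X) := by
    linear_combination (norm := module) (-(1/4 : ℝ)) • hX
  have hQQ : Q (Q X) = Q X := by
    have := congrArg (fun f => f X) hQ; simpa using this
  rw [hQX] at hQQ
  rw [map_sub, map_smul, map_smul, hQX] at hQQ
  have hQPX : Q (P X) = (2 : ℝ) • (((2 + s) / 4 : ℝ) • (((2 + s) / 4 : ℝ) • X - (1 / 2 : ℝ) • P X)) - (2 : ℝ) • (((2 + s) / 4 : ℝ) • X - (1 / 2 : ℝ) • P X) := by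
    linear_combination (norm := module) ((-2 : ℝ)) • hQQ
  rw [hPP, hQPX]
  match_scalars <;> field_simp <;> nlinarith [hs]
end

section
/- Let (P_0, …, P_m) be a symmetric Clifford system on ℝ^{2l} and let x ∈ ℝ^{2l} satisfy ‖x‖ = 1 and ∑_{i=0}^m ⟨P_i x, x⟩² = 1/2. Define the linear endomorphisms P(X) := ∑_{i=0}^m ⟨P_i x, x⟩ P_i X, Q(X) := ∑_{i=0}^m ⟨P_i x, X⟩ P_i x, and A := id − 2P − 4Q. Then X ↦ P(X) restricts to a linear bijection from the eigenspace {X ∈ ℝ^{2l} : A X = −(1+√2) X} onto the eigenspace {Y ∈ ℝ^{2l} : A Y = (√2 − 1) Y}. -/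
open scoped RealInnerProductSpace BigOperators

/-- For a symmetric Clifford system on `ℝ^{2l}` and `x` on the OT-FKM
isoparametric hypersurface (`‖x‖ = 1`, `∑ i, ⟪P i x, x⟫² = 1/2`), with
`Pm X = ∑ i, ⟪P i x, x⟫ • P i X`, `Qm X = ∑ i, ⟪P i x, X⟫ • P i x` and
`A = id − 2 Pm − 4 Qm`, the map `Pm` restricts to a (linear) bijection from the eigenspace
`{X | A X = −(1+√2) X}` (the principal distribution 𝒟₁) onto the eigenspace
`{Y | A Y = (√2−1) Y}` (the principal distribution 𝒟₃). -/
theorem stmt4 (l m : ℕ)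
    (P : Fin (m + 1) → EuclideanSpace ℝ (Fin (2 * l)) →ₗ[ℝ] EuclideanSpace ℝ (Fin (2 * l)))
    (hsym : ∀ i x y, ⟪P i x, y⟫ = ⟪x, P i y⟫)
    (hcliff : ∀ i j y, P i (P j y) + P j (P i y) = if i = j then (2 : ℝ) • y else 0)
    (x : EuclideanSpace ℝ (Fin (2 * l)))
    (hx : ‖x‖ = 1)
    (hM : ∑ i, ⟪P i x, x⟫ ^ 2 = 1 / 2)
    (Pm Qm A : EuclideanSpace ℝ (Fin (2 * l)) →ₗ[ℝ] EuclideanSpace ℝ (Fin (2 * l)))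
    (hPm : ∀ X, Pm X = ∑ i, ⟪P i x, x⟫ • P i X)
    (hQm : ∀ X, Qm X = ∑ i, ⟪P i x, X⟫ • P i x)
    (hA : ∀ X, A X = X - (2 : ℝ) • Pm X - (4 : ℝ) • Qm X) :
    Set.BijOn (fun X => Pm X)
      {X : EuclideanSpace ℝ (Fin (2 * l)) | A X = (-(1 + Real.sqrt 2)) • X}
      {Y : EuclideanSpace ℝ (Fin (2 * l)) | A Y = (Real.sqrt 2 - 1) • Y} := by
  -- orthonormality of the P i x
  have horth : ∀ i j, ⟪P i x, P j x⟫ = if i = j then (1:ℝ) else 0 := by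
    intro i j
    have h1 : ⟪P i x, P j x⟫ = ⟪x, P i (P j x)⟫ := hsym i x (P j x)
    have h2 : ⟪P i x, P j x⟫ = ⟪x, P j (P i x)⟫ := by
      rw [real_inner_comm]; exact hsym j x (P i x)
    have h3 : ⟪P i x, P j x⟫ + ⟪P i x, P j x⟫
        = ⟪x, P i (P j x) + P j (P i x)⟫ := by
      rw [inner_add_right, ← h1, ← h2]
    rw [hcliff] at h3
    rcases eq_or_ne i j with h | h
    · subst h
      rw [if_pos rfl] at h3 ⊢
      have h2x : ⟪x, (2:ℝ) • x⟫ = (2:ℝ) := by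
        rw [real_inner_smul_right, real_inner_self_eq_norm_sq, hx]; norm_num
      rw [h2x] at h3; linarith
    · rw [if_neg h] at h3 ⊢
      rw [inner_zero_right] at h3; linarith
  -- Pm ∘ Pm = (1/2) • id
  have hPm2 : ∀ X, Pm (Pm X) = (1/2 : ℝ) • X := by
    intro X
    have hexp : Pm (Pm X)
        = ∑ i, ∑ j, (⟪P i x, x⟫ * ⟪P j x, x⟫) • P i (P j X) := by
      rw [hPm (Pm X)]
      refine Finset.sum_congr rfl fun i _ => ?_
      rw [hPm X, map_sum, Finset.smul_sum]
      refine Finset.sum_congr rfl fun j _ => ?_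
      rw [map_smul, smul_smul]
    have hsum : Pm (Pm X) + Pm (Pm X)
        = ∑ i, ∑ j, (⟪P i x, x⟫ * ⟪P j x, x⟫) • (if i = j then (2:ℝ) • X else 0) := by
      nth_rewrite 2 [hexp]
      rw [hexp]
      nth_rewrite 2 [Finset.sum_comm]
      rw [← Finset.sum_add_distrib]
      refine Finset.sum_congr rfl fun i _ => ?_
      rw [← Finset.sum_add_distrib]
      refine Finset.sum_congr rfl fun j _ => ?_
      rw [show (⟪P j x, x⟫ * ⟪P i x, x⟫) = (⟪P i x, x⟫ * ⟪P j x, x⟫) by ring,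
        ← smul_add, hcliff]
    have : Pm (Pm X) + Pm (Pm X) = X := by
      rw [hsum]
      have : ∀ i : Fin (m+1), (∑ j, (⟪P i x, x⟫ * ⟪P j x, x⟫) •
          (if i = j then (2:ℝ) • X else 0)) = (⟪P i x, x⟫ ^ 2 * 2) • X := by
        intro i
        rw [Finset.sum_eq_single i]
        · rw [if_pos rfl, smul_smul]; ring_nf
        · intro j _ hj; rw [if_neg (Ne.symm hj), smul_zero]
        · intro h; exact absurd (Finset.mem_univ i) h
      rw [Finset.sum_congr rfl fun i _ => this i, ← Finset.sum_smul]
      rw [show (∑ i, ⟪P i x, x⟫ ^ 2 * 2) = (∑ i, ⟪P i x, x⟫ ^ 2) * 2 by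
        rw [Finset.sum_mul], hM]
      norm_num
    have h2 : (2:ℝ) • Pm (Pm X) = X := by
      rw [two_smul]; exact this
    calc Pm (Pm X) = (1/2 : ℝ) • ((2:ℝ) • Pm (Pm X)) := by
          rw [smul_smul]; norm_num
      _ = (1/2 : ℝ) • X := by rw [h2]
  -- Qm is idempotent
  have hQm2 : ∀ X, Qm (Qm X) = Qm X := by
    intro X
    have key : ∀ i, ⟪P i x, Qm X⟫ = ⟪P i x, X⟫ := by
      intro i
      rw [hQm X, inner_sum]
      rw [Finset.sum_eq_single i]
      · rw [real_inner_smul_right, horth, if_pos rfl]; ring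
      · intro j _ hj
        rw [real_inner_smul_right, horth, if_neg (Ne.symm hj)]; ring
      · intro h; exact absurd (Finset.mem_univ i) h
    rw [hQm (Qm X)]
    simp_rw [key]
    exact (hQm X).symm
  -- eigenvalue swap
  have hswap : ∀ (lam : ℝ), (3 + lam) * (1 - lam) = 2 →
      ∀ X, A X = lam • X → A (Pm X) = (-2 - lam) • Pm X := by
    intro lam hlam X hX
    have h1 : X - (2:ℝ) • Pm X - (4:ℝ) • Qm X = lam • X := by rw [← hA]; exact hX
    have hQX : Qm X = ((1 - lam)/4) • X - ((1:ℝ)/2) • Pm X := by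
      linear_combination (norm := module) (-1/4 : ℝ) • h1
    have h2 : Qm X = ((1 - lam)/4) • Qm X - ((1:ℝ)/2) • Qm (Pm X) := by
      conv_lhs => rw [← hQm2 X]
      nth_rewrite 1 [hQX]
      rw [map_sub, map_smul, map_smul]
    have h3 : Qm (Pm X) = ((1 - lam)/2 - 2) • Qm X := by
      linear_combination (norm := module) (2 : ℝ) • h2
    have h4 : A (Pm X) = Pm X - (2:ℝ) • ((1/2 : ℝ) • X)
        - (4:ℝ) • (((1 - lam)/2 - 2) • (((1 - lam)/4) • X - ((1:ℝ)/2) • Pm X)) := by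
      rw [hA (Pm X), hPm2, h3, hQX]
    rw [h4]
    match_scalars <;>
      first
        | ring1
        | linear_combination ((1:ℝ)/2) * hlam
  have hs2 : Real.sqrt 2 ^ 2 = 2 := Real.sq_sqrt (by norm_num)
  have hroot1 : (3 + (-(1 + Real.sqrt 2))) * (1 - (-(1 + Real.sqrt 2))) = 2 := by
    linear_combination -hs2
  have hroot2 : (3 + (Real.sqrt 2 - 1)) * (1 - (Real.sqrt 2 - 1)) = 2 := by
    linear_combination -hs2
  refine ⟨?_, ?_, ?_⟩
  · intro X hX
    have := hswap _ hroot1 X hX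
    have he : (-2 - (-(1 + Real.sqrt 2))) = Real.sqrt 2 - 1 := by ring
    rw [he] at this
    exact this
  · intro X hX X' hX' h
    have : (2:ℝ) • Pm (Pm X) = (2:ℝ) • Pm (Pm X') := by
      simp only at h
      rw [h]
    rw [hPm2, hPm2, smul_smul, smul_smul] at this
    norm_num at this
    exact this
  · intro Y hY
    refine ⟨(2:ℝ) • Pm Y, ?_, ?_⟩
    · have := hswap _ hroot2 Y hY
      have he : (-2 - (Real.sqrt 2 - 1)) = -(1 + Real.sqrt 2) := by ring
      rw [he] at this
      show A ((2:ℝ) • Pm Y) = (-(1 + Real.sqrt 2)) • ((2:ℝ) • Pm Y)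
      rw [map_smul, this, smul_comm]
    · show Pm ((2:ℝ) • Pm Y) = Y
      rw [map_smul, hPm2, smul_smul]
      norm_num
end

section
/- Let (P_0, …, P_m) be a symmetric Clifford system on ℝ^{2l} and let x ∈ ℝ^{2l} satisfy ‖x‖ = 1 and ∑_{i=0}^m ⟨P_i x, x⟩² = 1/2. Then the vector ξ(x) := x − 2∑_{i=0}^m ⟨P_i x, x⟩ P_i x satisfies ‖ξ(x)‖ = 1. -/
open scoped RealInnerProductSpace BigOperators

/-- For a symmetric Clifford system on `ℝ^{2l}` and `x` on the OT-FKM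
isoparametric hypersurface (`‖x‖ = 1`, `∑ i, ⟪P i x, x⟫² = 1/2`), the unit normal
`ξ(x) = x − 2 ∑ i, ⟪P i x, x⟫ • P i x` has norm `1`. -/
theorem stmt6 (l m : ℕ)
    (P : Fin (m + 1) → EuclideanSpace ℝ (Fin (2 * l)) →ₗ[ℝ] EuclideanSpace ℝ (Fin (2 * l)))
    (hsym : ∀ i x y, ⟪P i x, y⟫ = ⟪x, P i y⟫)
    (hcliff : ∀ i j y, P i (P j y) + P j (P i y) = if i = j then (2 : ℝ) • y else 0)
    (x : EuclideanSpace ℝ (Fin (2 * l)))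
    (hx : ‖x‖ = 1)
    (hM : ∑ i, ⟪P i x, x⟫ ^ 2 = 1 / 2) :
    ‖x - (2 : ℝ) • ∑ i, ⟪P i x, x⟫ • P i x‖ = 1 := by
  have hxx : ⟪x, x⟫ = 1 := by
    rw [real_inner_self_eq_norm_sq, hx]; norm_num
  have hPP : ∀ i j, ⟪P i x, P j x⟫ = if i = j then (1 : ℝ) else 0 := by
    intro i j
    have h2 : ⟪P i x, P j x⟫ + ⟪P i x, P j x⟫
        = ⟪x, P i (P j x) + P j (P i x)⟫ := by
      rw [inner_add_right, ← hsym i x (P j x)]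
      nth_rewrite 2 [real_inner_comm]
      rw [← hsym j x (P i x), real_inner_comm (P j x)]
    rw [hcliff] at h2
    split_ifs at h2 ⊢ with h
    · rw [inner_smul_right, hxx] at h2; linarith
    · rw [inner_zero_right] at h2; linarith
  set v := ∑ i, ⟪P i x, x⟫ • P i x with hv
  have hxv : ⟪x, v⟫ = 1 / 2 := by
    rw [hv, inner_sum, ← hM]
    refine Finset.sum_congr rfl fun i _ => ?_
    rw [real_inner_smul_right, real_inner_comm]; ring
  have hvv : ⟪v, v⟫ = 1 / 2 := by
    rw [hv, sum_inner, ← hM]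
    refine Finset.sum_congr rfl fun i _ => ?_
    rw [real_inner_smul_left, inner_sum]
    have : ∀ j ∈ Finset.univ, ⟪P i x, ⟪P j x, x⟫ • P j x⟫
        = if i = j then ⟪P i x, x⟫ else 0 := by
      intro j _
      rw [real_inner_smul_right, hPP i j]
      split_ifs with h
      · subst h; ring
      · ring
    rw [Finset.sum_congr rfl this, Finset.sum_ite_eq Finset.univ i fun _ => ⟪P i x, x⟫]
    simp [pow_two]
  have key : ⟪x - (2 : ℝ) • v, x - (2 : ℝ) • v⟫ = 1 := by
    rw [inner_sub_left, inner_sub_right, inner_sub_right, real_inner_smul_left,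
      real_inner_smul_left, real_inner_smul_right, real_inner_smul_right,
      hxx, hvv, hxv]
    have hvx : ⟪v, x⟫ = 1 / 2 := by rw [real_inner_comm]; exact hxv
    rw [hvx]; ring
  have h := real_inner_self_eq_norm_mul_norm (x - (2 : ℝ) • v)
  rw [key] at h
  nlinarith [norm_nonneg (x - (2 : ℝ) • v)]
end

section
/- Let (P_0, …, P_m) be a symmetric Clifford system on ℝ^{2l} and let x ∈ ℝ^{2l} satisfy ‖x‖ = 1 and ∑_{i=0}^m ⟨P_i x, x⟩² = 1/2. Set ξ(x) := x − 2∑_{i=0}^m ⟨P_i x, x⟩ P_i x. Then for every j = 0, …, m one has ⟨P_j ξ(x), ξ(x)⟩ = −⟨P_j x, x⟩; consequently ∑_{j=0}^m ⟨P_j ξ(x), ξ(x)⟩² = 1/2, i.e. ξ maps the isoparametric hypersurface M into itself. -/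
open scoped RealInnerProductSpace BigOperators

/-- For a symmetric Clifford system on `ℝ^{2l}` and `x` on the OT-FKM
isoparametric hypersurface (`‖x‖ = 1`, `∑ i, ⟪P i x, x⟫² = 1/2`), the unit normal
`ξ(x) = x − 2 ∑ i, ⟪P i x, x⟫ • P i x` satisfies `⟪P j ξ(x), ξ(x)⟫ = −⟪P j x, x⟫` for all
`j`, and hence `∑ j, ⟪P j ξ(x), ξ(x)⟫² = 1/2`, i.e. `ξ` maps `M` into itself. -/
theorem stmt7 (l m : ℕ)
    (P : Fin (m + 1) → EuclideanSpace ℝ (Fin (2 * l)) →ₗ[ℝ] EuclideanSpace ℝ (Fin (2 * l)))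
    (hsym : ∀ i x y, ⟪P i x, y⟫ = ⟪x, P i y⟫)
    (hcliff : ∀ i j y, P i (P j y) + P j (P i y) = if i = j then (2 : ℝ) • y else 0)
    (x : EuclideanSpace ℝ (Fin (2 * l)))
    (hx : ‖x‖ = 1)
    (hM : ∑ i, ⟪P i x, x⟫ ^ 2 = 1 / 2)
    (ξx : EuclideanSpace ℝ (Fin (2 * l)))
    (hξx : ξx = x - (2 : ℝ) • ∑ i, ⟪P i x, x⟫ • P i x) :
    (∀ j, ⟪P j ξx, ξx⟫ = -⟪P j x, x⟫) ∧ ∑ j, ⟪P j ξx, ξx⟫ ^ 2 = 1 / 2 := by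
  set a : Fin (m + 1) → ℝ := fun i => ⟪P i x, x⟫ with ha
  have hx2 : ⟪x, x⟫ = (1 : ℝ) := by
    rw [real_inner_self_eq_norm_mul_norm, hx]; ring
  have lem1 : ∀ i k : Fin (m + 1), ⟪P i x, P k x⟫ = if i = k then (1 : ℝ) else 0 := by
    intro i k
    have h3 : ⟪P i x, P k x⟫ + ⟪P i x, P k x⟫ = ⟪P i (P k x) + P k (P i x), x⟫ := by
      rw [inner_add_left]
      congr 1
      · rw [real_inner_comm, hsym i]
      · rw [← hsym k]
    rw [hcliff i k x] at h3
    by_cases h : i = k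
    · rw [if_pos h] at h3
      rw [real_inner_smul_left, hx2] at h3
      rw [if_pos h]; linarith
    · rw [if_neg h] at h3
      rw [inner_zero_left] at h3
      rw [if_neg h]; linarith
  set y : EuclideanSpace ℝ (Fin (2 * l)) := ∑ i, a i • P i x with hy
  have hξ : ξx = x - (2 : ℝ) • y := hξx
  have hy1 : ∀ j, ⟪P j x, y⟫ = a j := by
    intro j
    rw [hy, inner_sum]
    simp only [real_inner_smul_right, lem1]
    simp [Finset.sum_ite_eq' Finset.univ j]
  have hy2 : ∀ j, ⟪y, P j x⟫ = a j := by
    intro j; rw [real_inner_comm]; exact hy1 j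
  -- key quadratic sums
  have hPjy : ∀ j, P j y = ∑ k, a k • P j (P k x) := by
    intro j; rw [hy, map_sum]; simp [map_smul]
  have hasum : ∑ i, a i ^ 2 = 1 / 2 := hM
  have hquad : ∀ j, ⟪y, P j y⟫ = a j / 2 := by
    intro j
    have hb : ⟪y, P j y⟫ = ∑ i, ∑ k, a i * a k * ⟪P i x, P j (P k x)⟫ := by
      rw [hPjy j, hy, sum_inner]
      refine Finset.sum_congr rfl fun i _ => ?_
      rw [real_inner_smul_left, inner_sum, Finset.mul_sum]
      refine Finset.sum_congr rfl fun k _ => ?_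
      rw [real_inner_smul_right]; ring
    set S' : ℝ := ∑ i, ∑ k, a i * a k * ⟪P i x, P k (P j x)⟫ with hS'def
    have hA : ⟪y, P j y⟫ + S' = a j := by
      rw [hb, hS'def, ← Finset.sum_add_distrib]
      have : ∀ i : Fin (m+1), (∑ k, a i * a k * ⟪P i x, P j (P k x)⟫) +
          (∑ k, a i * a k * ⟪P i x, P k (P j x)⟫)
          = ∑ k, a i * a k * (if j = k then 2 * a i else 0) := by
        intro i
        rw [← Finset.sum_add_distrib]
        refine Finset.sum_congr rfl fun k _ => ?_
        have : ⟪P i x, P j (P k x)⟫ + ⟪P i x, P k (P j x)⟫ = if j = k then 2 * a i else 0 := by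
          rw [← inner_add_right, hcliff j k x]
          by_cases h : j = k
          · rw [if_pos h, if_pos h, real_inner_smul_right]
          · rw [if_neg h, if_neg h, inner_zero_right]
        rw [← left_distrib, this]
      simp only [this]
      have heach : ∀ i : Fin (m+1), (∑ k, a i * a k * (if j = k then 2 * a i else 0))
          = 2 * a j * a i ^ 2 := by
        intro i
        rw [Finset.sum_eq_single j]
        · rw [if_pos rfl]; ring
        · intro k _ hk; rw [if_neg (Ne.symm hk), mul_zero]
        · intro h; exact absurd (Finset.mem_univ j) h
      simp only [heach]
      rw [← Finset.mul_sum, hasum]; ring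
    have hc : ∀ i k : Fin (m+1), ⟪P k x, P i (P j x)⟫ + ⟪P i x, P k (P j x)⟫
        = if i = k then 2 * a j else 0 := by
      intro i k
      have e1 : ⟪P k x, P i (P j x)⟫ = ⟪P i (P k x), P j x⟫ := (hsym i (P k x) (P j x)).symm
      have e2 : ⟪P i x, P k (P j x)⟫ = ⟪P k (P i x), P j x⟫ := (hsym k (P i x) (P j x)).symm
      rw [e1, e2, ← inner_add_left, hcliff i k x]
      by_cases h : i = k
      · rw [if_pos h, if_pos h, real_inner_smul_left, real_inner_comm]
      · rw [if_neg h, if_neg h, inner_zero_left]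
    have hS' : S' = a j / 2 := by
      have hswap : S' = ∑ i, ∑ k, a k * a i * ⟪P k x, P i (P j x)⟫ := by
        rw [hS'def]; exact Finset.sum_comm
      have h2 : S' + S' = a j := by
        nth_rewrite 1 [hswap]
        rw [hS'def, ← Finset.sum_add_distrib]
        have heach : ∀ i : Fin (m+1), (∑ k, a k * a i * ⟪P k x, P i (P j x)⟫) +
            (∑ k, a i * a k * ⟪P i x, P k (P j x)⟫)
            = 2 * a j * a i ^ 2 := by
          intro i
          rw [← Finset.sum_add_distrib]
          have : ∀ k : Fin (m+1), a k * a i * ⟪P k x, P i (P j x)⟫ +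
              a i * a k * ⟪P i x, P k (P j x)⟫
              = a i * a k * (if i = k then 2 * a j else 0) := by
            intro k
            rw [← hc i k]; ring
          rw [Finset.sum_congr rfl fun k _ => this k]
          rw [Finset.sum_eq_single i]
          · rw [if_pos rfl]; ring
          · intro k _ hk; rw [if_neg (Ne.symm hk), mul_zero]
          · intro h; exact absurd (Finset.mem_univ i) h
        rw [Finset.sum_congr rfl fun i _ => heach i, ← Finset.mul_sum, hasum]; ring
      linarith
    linarith
  -- now compute inner product with xi
  have key : ∀ j, ⟪P j ξx, ξx⟫ = -a j := by
    intro j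
    have hPξ : P j ξx = P j x - (2 : ℝ) • P j y := by
      rw [hξ, map_sub, map_smul]
    rw [hPξ, hξ, inner_sub_left, inner_sub_right, inner_sub_right,
        real_inner_smul_left, real_inner_smul_left, real_inner_smul_right,
        real_inner_smul_right, hy1 j]
    have h1 : ⟪P j y, x⟫ = a j := by
      rw [hsym j]; exact hy2 j
    have h2 : ⟪P j y, y⟫ = a j / 2 := by
      rw [real_inner_comm]; exact hquad j
    rw [h1, h2]
    show a j - 2 * a j - (2 * a j - 2 * (2 * (a j / 2))) = -a j
    ring
  constructor
  · exact key
  · simp only [key, neg_sq]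
    exact hasum
end

section
/- Let (P_0, …, P_m) be a symmetric Clifford system on ℝ^{2l} and let x ∈ ℝ^{2l} satisfy ‖x‖ = 1 and ∑_{i=0}^m ⟨P_i x, x⟩² = 1/2. Set ξ(y) := y − 2∑_{i=0}^m ⟨P_i y, y⟩ P_i y for y ∈ ℝ^{2l}. Then ξ(ξ(x)) = −x. -/
open scoped RealInnerProductSpace BigOperators

/-- For a symmetric Clifford system on `ℝ^{2l}` and `x` on the OT-FKM
isoparametric hypersurface (`‖x‖ = 1`, `∑ i, ⟪P i x, x⟫² = 1/2`), the map
`ξ(y) = y − 2 ∑ i, ⟪P i y, y⟫ • P i y` satisfies `ξ(ξ(x)) = −x`. -/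
theorem stmt8 (l m : ℕ)
    (P : Fin (m + 1) → EuclideanSpace ℝ (Fin (2 * l)) →ₗ[ℝ] EuclideanSpace ℝ (Fin (2 * l)))
    (hsym : ∀ i x y, ⟪P i x, y⟫ = ⟪x, P i y⟫)
    (hcliff : ∀ i j y, P i (P j y) + P j (P i y) = if i = j then (2 : ℝ) • y else 0)
    (x : EuclideanSpace ℝ (Fin (2 * l)))
    (hx : ‖x‖ = 1)
    (hM : ∑ i, ⟪P i x, x⟫ ^ 2 = 1 / 2)
    (ξ : EuclideanSpace ℝ (Fin (2 * l)) → EuclideanSpace ℝ (Fin (2 * l)))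
    (hξ : ∀ y, ξ y = y - (2 : ℝ) • ∑ i, ⟪P i y, y⟫ • P i y) :
    ξ (ξ x) = -x := by
  have hxx : ⟪x, x⟫ = 1 := by
    rw [real_inner_self_eq_norm_mul_norm, hx]; ring
  have hsum_c : ∑ i, ⟪P i x, x⟫ * ⟪P i x, x⟫ = 1/2 := by simpa [sq] using hM
  -- orthonormality of P i x
  have horth : ∀ i j, ⟪P i x, P j x⟫ = if i = j then 1 else 0 := by
    intro i j
    have h4 : ⟪P i (P j x) + P j (P i x), x⟫
        = ⟪(if i = j then (2:ℝ) • x else 0 : EuclideanSpace ℝ (Fin (2*l))), x⟫ := by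
      rw [hcliff]
    rw [inner_add_left, hsym i (P j x) x, hsym j (P i x) x,
      apply_ite (fun v => ⟪v, x⟫), inner_zero_left, real_inner_smul_left, hxx] at h4
    split_ifs at h4 ⊢ <;> linarith [real_inner_comm ((P i) x) ((P j) x)]
  have horth' : ∀ i j, ⟪P i (P j x), x⟫ = if j = i then 1 else 0 := by
    intro i j; rw [hsym i (P j x) x]; exact horth j i
  -- the triple product lemma
  have hT : ∀ j i k, ⟪P j (P i x), P k x⟫ =
      (if j = i then ⟪P k x, x⟫ else 0) - (if k = i then ⟪P j x, x⟫ else 0)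
        + (if k = j then ⟪P i x, x⟫ else 0) := by
    intro j i k
    have E1 : ⟪P k (P j (P i x)), x⟫ + ⟪P j (P k (P i x)), x⟫
        = if k = j then 2 * ⟪P i x, x⟫ else 0 := by
      have h : ⟪P k (P j (P i x)) + P j (P k (P i x)), x⟫
          = ⟪(if k = j then (2:ℝ) • (P i x) else 0 : EuclideanSpace ℝ (Fin (2*l))), x⟫ := by
        rw [hcliff]
      rwa [inner_add_left, apply_ite (fun v => ⟪v, x⟫), inner_zero_left,
        real_inner_smul_left] at h
    have E2 : ⟪P j (P k (P i x)), x⟫ + ⟪P j (P i (P k x)), x⟫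
        = if k = i then 2 * ⟪P j x, x⟫ else 0 := by
      have h : ⟪P j (P k (P i x) + P i (P k x)), x⟫
          = ⟪P j (if k = i then (2:ℝ) • x else 0 : EuclideanSpace ℝ (Fin (2*l))), x⟫ := by
        rw [hcliff]
      rwa [map_add, inner_add_left, apply_ite (P j), map_smul, map_zero,
        apply_ite (fun v => ⟪v, x⟫), inner_zero_left, real_inner_smul_left] at h
    have E3 : ⟪P j (P i (P k x)), x⟫ + ⟪P i (P j (P k x)), x⟫
        = if j = i then 2 * ⟪P k x, x⟫ else 0 := by
      have h : ⟪P j (P i (P k x)) + P i (P j (P k x)), x⟫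
          = ⟪(if j = i then (2:ℝ) • (P k x) else 0 : EuclideanSpace ℝ (Fin (2*l))), x⟫ := by
        rw [hcliff]
      rwa [inner_add_left, apply_ite (fun v => ⟪v, x⟫), inner_zero_left,
        real_inner_smul_left] at h
    have E4 : ⟪P i (P j (P k x)), x⟫ = ⟪P k (P j (P i x)), x⟫ := by
      rw [hsym i _ x, hsym k _ x, hsym j (P k x) (P i x), real_inner_comm]
    have E5 : ⟪P k (P j (P i x)), x⟫ = ⟪P j (P i x), P k x⟫ := hsym k _ x
    split_ifs at E1 E2 E3 ⊢ <;> linarith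
  -- set up u
  set u : EuclideanSpace ℝ (Fin (2 * l)) := ∑ i, ⟪P i x, x⟫ • P i x with hu
  have hξx : ξ x = x - (2:ℝ) • u := by rw [hξ x]
  have hPu_x : ∀ j, ⟪P j u, x⟫ = ⟪P j x, x⟫ := by
    intro j
    rw [hu]
    simp only [map_sum, map_smul, sum_inner, real_inner_smul_left, horth',
      mul_ite, mul_one, mul_zero, Finset.sum_ite_eq', Finset.mem_univ, if_true]
  have hPx_u : ∀ j, ⟪P j x, u⟫ = ⟪P j x, x⟫ := by
    intro j
    rw [hu]
    simp only [inner_sum, real_inner_smul_right, horth, mul_ite, mul_one, mul_zero,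
      Finset.sum_ite_eq, Finset.mem_univ, if_true]
  have hPu_u : ∀ j, ⟪P j u, u⟫ = 1/2 * ⟪P j x, x⟫ := by
    intro j
    have key : ∀ i, ⟪P j (P i x), u⟫ = if j = i then 1/2 else 0 := by
      intro i
      rw [hu]
      simp only [inner_sum, real_inner_smul_right, hT]
      by_cases h : j = i
      · simp only [h, if_true, if_pos rfl]
        rw [Finset.sum_congr rfl (fun k _ => by ring_nf :
          ∀ k ∈ Finset.univ, ⟪P k x, x⟫ *
            ((⟪P k x, x⟫ - if k = i then ⟪P i x, x⟫ else 0)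
              + if k = i then ⟪P i x, x⟫ else 0)
            = ⟪P k x, x⟫ * ⟪P k x, x⟫)]
        exact hsum_c
      · simp only [h, if_false]
        simp only [mul_sub, mul_add, mul_ite, mul_zero, mul_neg, zero_sub, zero_add,
          Finset.sum_add_distrib, Finset.sum_sub_distrib, Finset.sum_neg_distrib,
          Finset.sum_ite_eq', Finset.mem_univ, if_true]
        ring
    nth_rewrite 1 [hu]
    rw [map_sum, sum_inner]
    simp only [map_smul, real_inner_smul_left, key, mul_ite, mul_one, mul_zero,
      Finset.sum_ite_eq, Finset.mem_univ, if_true]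
    ring
  have hb : ∀ j, ⟪P j (ξ x), ξ x⟫ = -⟪P j x, x⟫ := by
    intro j
    rw [hξx]
    rw [map_sub, map_smul, inner_sub_left, inner_sub_right, inner_sub_right,
      real_inner_smul_left, real_inner_smul_left, real_inner_smul_right,
      real_inner_smul_right, hPu_x j, hPx_u j, hPu_u j]
    ring
  -- double sum lemma
  have hDD : ∑ j, ⟪P j x, x⟫ • P j u
      = ∑ j, ∑ i, (⟪P j x, x⟫ * ⟪P i x, x⟫) • P j (P i x) := by
    rw [hu]
    simp [map_sum, map_smul, Finset.smul_sum, smul_smul]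
  have hswap : ∑ j, ∑ i, (⟪P j x, x⟫ * ⟪P i x, x⟫) • P j (P i x)
      = ∑ j, ∑ i, (⟪P j x, x⟫ * ⟪P i x, x⟫) • P i (P j x) := by
    rw [Finset.sum_comm]
    exact Finset.sum_congr rfl fun j _ => Finset.sum_congr rfl fun i _ =>
      congrArg (· • (P i) ((P j) x)) (mul_comm _ _)
  have h2 : (2:ℝ) • (∑ j, ∑ i, (⟪P j x, x⟫ * ⟪P i x, x⟫) • P j (P i x)) = x := by
    rw [two_smul]
    nth_rewrite 2 [hswap]
    rw [← Finset.sum_add_distrib]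
    calc ∑ j, (∑ i, (⟪P j x, x⟫ * ⟪P i x, x⟫) • P j (P i x)
          + ∑ i, (⟪P j x, x⟫ * ⟪P i x, x⟫) • P i (P j x))
        = ∑ j, ∑ i, (⟪P j x, x⟫ * ⟪P i x, x⟫) • (P j (P i x) + P i (P j x)) := by
          simp [Finset.sum_add_distrib, smul_add]
      _ = ∑ j, ∑ i, (if j = i then (⟪P j x, x⟫ * ⟪P i x, x⟫) • ((2:ℝ) • x) else 0) := by
          refine Finset.sum_congr rfl fun j _ => Finset.sum_congr rfl fun i _ => ?_
          rw [hcliff, apply_ite ((⟪P j x, x⟫ * ⟪P i x, x⟫) • ·), smul_zero]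
      _ = ∑ j, (⟪P j x, x⟫ * ⟪P j x, x⟫) • ((2:ℝ) • x) := by
          simp [Finset.sum_ite_eq']
      _ = x := by
          rw [← Finset.sum_smul, hsum_c, smul_smul]; norm_num
  have hDval : ∑ j, ⟪P j x, x⟫ • P j u = (1/2:ℝ) • x := by
    rw [hDD]
    have : ∑ j, ∑ i, (⟪P j x, x⟫ * ⟪P i x, x⟫) • P j (P i x)
        = (1/2:ℝ) • ((2:ℝ) • (∑ j, ∑ i, (⟪P j x, x⟫ * ⟪P i x, x⟫) • P j (P i x))) := by
      rw [smul_smul]; norm_num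
    rw [this, h2]
  have hfinal : ∑ i, ⟪P i x, x⟫ • P i (ξ x) = u - x := by
    have hPξ : ∀ i, P i (ξ x) = P i x - (2:ℝ) • P i u := by
      intro i; rw [hξx, map_sub, map_smul]
    simp only [hPξ, smul_sub, Finset.sum_sub_distrib, ← hu]
    have : ∑ i, ⟪P i x, x⟫ • ((2:ℝ) • P i u) = x := by
      simp_rw [smul_comm _ (2:ℝ)]
      rw [← Finset.smul_sum, hDval, smul_smul]; norm_num
    rw [this]
  calc ξ (ξ x) = ξ x - (2:ℝ) • ∑ i, ⟪P i (ξ x), ξ x⟫ • P i (ξ x) := hξ _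
    _ = ξ x - (2:ℝ) • ∑ i, (-⟪P i x, x⟫) • P i (ξ x) := by
        rw [Finset.sum_congr rfl fun i _ => by rw [hb i]]
    _ = ξ x + (2:ℝ) • ∑ i, ⟪P i x, x⟫ • P i (ξ x) := by
        simp only [neg_smul, Finset.sum_neg_distrib, smul_neg, sub_neg_eq_add]
    _ = (x - (2:ℝ) • u) + (2:ℝ) • (u - x) := by rw [hfinal, hξx]
    _ = -x := by module
end

section
/- Let (P_0, …, P_m) be a symmetric Clifford system on ℝ^{2l}, let M := {x ∈ ℝ^{2l} : ‖x‖ = 1 and ∑_{i=0}^m ⟨P_i x, x⟩² = 1/2}, and define ξ(x) := x − 2∑_{i=0}^m ⟨P_i x, x⟩ P_i x. Then ξ maps M into M and the restriction ξ : M → M is a bijection. -/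
open scoped RealInnerProductSpace BigOperators

/-- For a symmetric Clifford system on `ℝ^{2l}`, the map
`ξ(x) = x − 2 ∑ i, ⟪P i x, x⟫ • P i x` maps the OT-FKM isoparametric hypersurface
`M = {x | ‖x‖ = 1 ∧ ∑ i, ⟪P i x, x⟫² = 1/2}` into itself, and `ξ : M → M` is a bijection. -/
theorem stmt9 (l m : ℕ)
    (P : Fin (m + 1) → EuclideanSpace ℝ (Fin (2 * l)) →ₗ[ℝ] EuclideanSpace ℝ (Fin (2 * l)))
    (hsym : ∀ i x y, ⟪P i x, y⟫ = ⟪x, P i y⟫)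
    (hcliff : ∀ i j y, P i (P j y) + P j (P i y) = if i = j then (2 : ℝ) • y else 0)
    (M : Set (EuclideanSpace ℝ (Fin (2 * l))))
    (hMdef : M = {x | ‖x‖ = 1 ∧ ∑ i, ⟪P i x, x⟫ ^ 2 = 1 / 2})
    (ξ : EuclideanSpace ℝ (Fin (2 * l)) → EuclideanSpace ℝ (Fin (2 * l)))
    (hξ : ∀ y, ξ y = y - (2 : ℝ) • ∑ i, ⟪P i y, y⟫ • P i y) :
    (∀ x ∈ M, ξ x ∈ M) ∧ Set.BijOn ξ M M := by
  subst hMdef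
  -- general algebraic facts
  have hPP : ∀ (x : EuclideanSpace ℝ (Fin (2 * l))) i j,
      ⟪P i x, P j x⟫ = if i = j then ⟪x, x⟫ else 0 := by
    intro x i j
    have h := congrArg (fun z => (inner ℝ x z : ℝ)) (hcliff i j x)
    simp only [inner_add_right, apply_ite (fun z => (inner ℝ x z : ℝ)), inner_smul_right,
      inner_zero_right] at h
    have e : ⟪x, P i (P j x)⟫ = ⟪P i x, P j x⟫ := (hsym i x (P j x)).symm
    have e' : ⟪x, P j (P i x)⟫ = ⟪P i x, P j x⟫ := by
      rw [← hsym j x (P i x), real_inner_comm]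
    rw [e, e'] at h
    split_ifs at h ⊢ <;> linarith
  have hu : ∀ (x : EuclideanSpace ℝ (Fin (2 * l))) j i k, ⟪P k x, P j (P i x)⟫ =
      (if j = i then ⟪P k x, x⟫ else 0) - (if i = k then ⟪x, P j x⟫ else 0)
        + (if k = j then ⟪P i x, x⟫ else 0) := by
    intro x j i k
    have r1 : ⟪P k x, P j (P i x)⟫ + ⟪P k x, P i (P j x)⟫
        = if j = i then 2 * ⟪P k x, x⟫ else 0 := by
      have h := congrArg (fun z => (inner ℝ (P k x) z : ℝ)) (hcliff j i x)
      simpa only [inner_add_right, apply_ite (fun z => (inner ℝ (P k x) z : ℝ)),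
        inner_smul_right, inner_zero_right] using h
    have r2 : ⟪P i (P k x), P j x⟫ + ⟪P k (P i x), P j x⟫
        = if i = k then 2 * ⟪x, P j x⟫ else 0 := by
      have h := congrArg (fun z => (inner ℝ z (P j x) : ℝ)) (hcliff i k x)
      simpa only [inner_add_left, apply_ite (fun z => (inner ℝ z (P j x) : ℝ)),
        inner_smul_left, inner_zero_left, RCLike.conj_to_real, map_ofNat] using h
    have r3 : ⟪P i x, P k (P j x)⟫ + ⟪P i x, P j (P k x)⟫
        = if k = j then 2 * ⟪P i x, x⟫ else 0 := by
      have h := congrArg (fun z => (inner ℝ (P i x) z : ℝ)) (hcliff k j x)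
      simpa only [inner_add_right, apply_ite (fun z => (inner ℝ (P i x) z : ℝ)),
        inner_smul_right, inner_zero_right] using h
    have e1 : ⟪P k x, P i (P j x)⟫ = ⟪P i (P k x), P j x⟫ := (hsym i (P k x) (P j x)).symm
    have e2 : ⟪P k (P i x), P j x⟫ = ⟪P i x, P k (P j x)⟫ := hsym k (P i x) (P j x)
    have e3 : ⟪P i x, P j (P k x)⟫ = ⟪P k x, P j (P i x)⟫ := by
      rw [← hsym j (P i x) (P k x), real_inner_comm]
    rw [e1] at r1
    rw [e2] at r2
    rw [e3] at r3
    split_ifs at r1 r2 r3 ⊢ <;> linarith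
  -- main computation for a point of M
  have main : ∀ x : EuclideanSpace ℝ (Fin (2 * l)), ‖x‖ = 1 →
      (∑ i, ⟪P i x, x⟫ ^ 2 = 1 / 2) →
      (‖ξ x‖ = 1 ∧ ∑ i, ⟪P i (ξ x), ξ x⟫ ^ 2 = 1 / 2) ∧ ξ (ξ x) = -x := by
    intro x hx1 hx2
    set a : Fin (m + 1) → ℝ := fun i => ⟪P i x, x⟫ with ha
    have haeq : ∀ i, (inner ℝ (P i x) x : ℝ) = a i := fun i => rfl
    set F : EuclideanSpace ℝ (Fin (2 * l)) := ∑ i, a i • P i x with hF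
    have hxx : ⟪x, x⟫ = (1 : ℝ) := by
      rw [real_inner_self_eq_norm_sq, hx1]; norm_num
    have hxF : ξ x = x - (2 : ℝ) • F := hξ x
    have hs : ∑ k, a k * a k = 1 / 2 := by
      rw [← hx2]
      exact Finset.sum_congr rfl fun i _ => by rw [haeq]; ring
    have hFx : ⟪F, x⟫ = 1 / 2 := by
      rw [hF, sum_inner]
      simp only [real_inner_smul_left, haeq]
      rw [← hs]
    have hxFi : ⟪x, F⟫ = 1 / 2 := by rw [real_inner_comm]; exact hFx
    have hPjF : ∀ j, ⟪P j x, F⟫ = a j := by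
      intro j
      rw [hF, inner_sum]
      simp only [real_inner_smul_right, hPP x, hxx, mul_ite, mul_one, mul_zero]
      simp
    have hFF : ⟪F, F⟫ = 1 / 2 := by
      rw [hF, sum_inner]
      simp only [real_inner_smul_left, hPjF]
      rw [← hF]; simp only [hPjF]
      exact hs
    have hPjFx : ∀ j, ⟪P j F, x⟫ = a j := by
      intro j
      rw [hsym j F x, real_inner_comm, hPjF]
    have hPjFF : ∀ j, ⟪P j F, F⟫ = a j / 2 := by
      intro j
      have expand : ⟪P j F, F⟫ = ∑ i, ∑ k, a i * a k * ⟪P k x, P j (P i x)⟫ := by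
        rw [hF, map_sum, sum_inner]
        refine Finset.sum_congr rfl fun i _ => ?_
        rw [map_smul, real_inner_smul_left, inner_sum, Finset.mul_sum]
        refine Finset.sum_congr rfl fun k _ => ?_
        rw [real_inner_smul_right, real_inner_comm ((P j) ((P i) x)) ((P k) x)]
        ring
      rw [expand]
      have step1 : ∀ i, ∑ k, a i * a k * ⟪P k x, P j (P i x)⟫ =
          ∑ k, ((if j = i then a i * a k * a k else 0)
            - (if i = k then a i * a k * a j else 0)
            + (if k = j then a i * a k * a i else 0)) := by
        intro i
        refine Finset.sum_congr rfl fun k _ => ?_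
        rw [hu x j i k]
        have c1 : (inner ℝ x ((P j) x) : ℝ) = a j := by
          rw [real_inner_comm]
        rw [c1, haeq i, haeq k]
        split_ifs <;> ring
      rw [Finset.sum_congr rfl fun i _ => step1 i]
      have step2 : ∀ i : Fin (m + 1),
          ∑ k, ((if j = i then a i * a k * a k else 0)
            - (if i = k then a i * a k * a j else 0)
            + (if k = j then a i * a k * a i else 0)) =
          (if j = i then a i / 2 else 0) - a i * a i * a j + a i * a j * a i := by
        intro i
        rw [Finset.sum_add_distrib, Finset.sum_sub_distrib]
        congr 1
        · congr 1
          · split_ifs with h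
            · calc ∑ k, a i * a k * a k = a i * ∑ k, a k * a k := by
                    rw [Finset.mul_sum]
                    exact Finset.sum_congr rfl fun k _ => by ring
                _ = a i / 2 := by rw [hs]; ring
            · simp
          · simp [Finset.sum_ite_eq]
        · simp [Finset.sum_ite_eq']
      rw [Finset.sum_congr rfl fun i _ => step2 i]
      rw [Finset.sum_add_distrib, Finset.sum_sub_distrib]
      have t1 : ∑ i, (if j = i then a i / 2 else 0) = a j / 2 := by
        simp [Finset.sum_ite_eq]
      have t2 : ∑ i, a i * a i * a j = a j / 2 := by
        rw [← Finset.sum_mul, hs]; ring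
      have t3 : ∑ i, a i * a j * a i = a j / 2 := by
        rw [← t2]; exact Finset.sum_congr rfl fun i _ => by ring
      rw [t1, t2, t3]
      ring
    -- ∑ a_j • P j F = (1/2) • x
    have hD : ∑ j, a j • P j F = (2⁻¹ : ℝ) • x := by
      have expand : ∑ j, a j • P j F = ∑ j, ∑ i, (a j * a i) • P j (P i x) := by
        refine Finset.sum_congr rfl fun j _ => ?_
        rw [hF, map_sum, Finset.smul_sum]
        exact Finset.sum_congr rfl fun i _ => by rw [map_smul, smul_smul]
      have hswap : ∑ j, ∑ i, (a j * a i) • P j (P i x)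
          = ∑ j, ∑ i, (a j * a i) • P i (P j x) := by
        rw [Finset.sum_comm]
        exact Finset.sum_congr rfl fun j _ => Finset.sum_congr rfl fun i _ => by
          rw [mul_comm (a j) (a i)]
      have hpair : ∀ j i : Fin (m + 1), (a j * a i) • P j (P i x) + (a j * a i) • P i (P j x)
          = if j = i then (a j * a i) • ((2 : ℝ) • x) else 0 := by
        intro j i
        rw [← smul_add, hcliff j i x]
        split_ifs <;> simp
      have h2 : (∑ j, ∑ i, (a j * a i) • P j (P i x))
          + ∑ j, ∑ i, (a j * a i) • P i (P j x) = x := by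
        rw [← Finset.sum_add_distrib]
        calc ∑ j, ((∑ i, (a j * a i) • P j (P i x)) + ∑ i, (a j * a i) • P i (P j x))
            = ∑ j, ∑ i, ((a j * a i) • P j (P i x) + (a j * a i) • P i (P j x)) :=
              Finset.sum_congr rfl fun j _ => (Finset.sum_add_distrib).symm
          _ = ∑ j, ∑ i, (if j = i then (a j * a i) • ((2 : ℝ) • x) else 0) :=
              Finset.sum_congr rfl fun j _ => Finset.sum_congr rfl fun i _ => hpair j i
          _ = ∑ j, (a j * a j) • ((2 : ℝ) • x) := by
              refine Finset.sum_congr rfl fun j _ => ?_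
              simp [Finset.sum_ite_eq]
          _ = ∑ j, (2 * (a j * a j)) • x :=
              Finset.sum_congr rfl fun j _ => by module
          _ = (∑ j, 2 * (a j * a j)) • x := (Finset.sum_smul).symm
          _ = x := by
              rw [← Finset.mul_sum, hs]; norm_num
      rw [expand]
      rw [← hswap] at h2
      have h3 : (2 : ℝ) • (∑ j, ∑ i, (a j * a i) • P j (P i x)) = x := by
        rw [two_smul]; exact h2
      calc ∑ j, ∑ i, (a j * a i) • P j (P i x)
          = (2⁻¹ : ℝ) • ((2 : ℝ) • (∑ j, ∑ i, (a j * a i) • P j (P i x))) := by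
            rw [smul_smul]; norm_num
        _ = (2⁻¹ : ℝ) • x := by rw [h3]
    -- b_j = -a_j
    have hb : ∀ j, ⟪P j (ξ x), ξ x⟫ = -a j := by
      intro j
      rw [hxF, map_sub, map_smul, inner_sub_left, inner_sub_right, inner_sub_right,
        real_inner_smul_left, real_inner_smul_left, real_inner_smul_right,
        real_inner_smul_right]
      rw [hPjF j, hPjFx j, hPjFF j, haeq j]
      ring
    -- norm of ξ x
    have hnorm : ‖ξ x‖ = 1 := by
      have hself : ⟪ξ x, ξ x⟫ = 1 := by
        rw [hxF, inner_sub_left, inner_sub_right, inner_sub_right, real_inner_smul_left,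
          real_inner_smul_left, real_inner_smul_right, real_inner_smul_right,
          hxx, hFx, hxFi, hFF]
        ring
      have hn : ‖ξ x‖ ^ 2 = 1 := by rw [← real_inner_self_eq_norm_sq, hself]
      have h0 : (0 : ℝ) ≤ ‖ξ x‖ := norm_nonneg _
      nlinarith
    have hsq : ∑ i, ⟪P i (ξ x), ξ x⟫ ^ 2 = 1 / 2 := by
      rw [← hx2]
      refine Finset.sum_congr rfl fun i _ => ?_
      rw [hb i, haeq i]
      ring
    refine ⟨⟨hnorm, hsq⟩, ?_⟩
    -- ξ (ξ x) = -x
    have hsum2 : ∑ j, ⟪P j (ξ x), ξ x⟫ • P j (ξ x) = x - F := by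
      have step : ∀ j, ⟪P j (ξ x), ξ x⟫ • P j (ξ x)
          = ((2 : ℝ) • (a j • P j F)) - a j • P j x := by
        intro j
        rw [hb j, hxF, map_sub, map_smul]
        module
      rw [Finset.sum_congr rfl fun j _ => step j]
      rw [Finset.sum_sub_distrib, ← Finset.smul_sum, hD, ← hF]
      rw [smul_smul]
      norm_num
    rw [hξ (ξ x), hsum2, hxF]
    module
  -- assemble
  have maps : ∀ x ∈ {x : EuclideanSpace ℝ (Fin (2 * l)) |
      ‖x‖ = 1 ∧ ∑ i, ⟪P i x, x⟫ ^ 2 = 1 / 2}, ξ x ∈ {x : EuclideanSpace ℝ (Fin (2 * l)) |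
      ‖x‖ = 1 ∧ ∑ i, ⟪P i x, x⟫ ^ 2 = 1 / 2} := by
    intro x hx
    exact ((main x hx.1 hx.2).1 : _)
  refine ⟨maps, ?_⟩
  have hneg : ∀ y, ξ (-y) = -ξ y := by
    intro y
    rw [hξ, hξ]
    have e : ∀ i : Fin (m + 1), ⟪P i (-y), -y⟫ • P i (-y) = -(⟪P i y, y⟫ • P i y) := by
      intro i
      rw [map_neg, inner_neg_neg, smul_neg]
    rw [Finset.sum_congr rfl fun i _ => e i, Finset.sum_neg_distrib, smul_neg]
    module
  have hMneg : ∀ y ∈ {x : EuclideanSpace ℝ (Fin (2 * l)) |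
      ‖x‖ = 1 ∧ ∑ i, ⟪P i x, x⟫ ^ 2 = 1 / 2}, -y ∈ {x : EuclideanSpace ℝ (Fin (2 * l)) |
      ‖x‖ = 1 ∧ ∑ i, ⟪P i x, x⟫ ^ 2 = 1 / 2} := by
    intro y hy
    refine ⟨by rw [norm_neg]; exact hy.1, ?_⟩
    rw [← hy.2]
    exact Finset.sum_congr rfl fun i _ => by rw [map_neg, inner_neg_neg]
  have gmaps : ∀ y ∈ {x : EuclideanSpace ℝ (Fin (2 * l)) |
      ‖x‖ = 1 ∧ ∑ i, ⟪P i x, x⟫ ^ 2 = 1 / 2},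
      -ξ y ∈ {x : EuclideanSpace ℝ (Fin (2 * l)) |
      ‖x‖ = 1 ∧ ∑ i, ⟪P i x, x⟫ ^ 2 = 1 / 2} := fun y hy => hMneg _ (maps y hy)
  refine Set.InvOn.bijOn (f' := fun y => -ξ y) ⟨?_, ?_⟩ maps gmaps
  · intro x hx
    simp only
    rw [(main x hx.1 hx.2).2, neg_neg]
  · intro y hy
    simp only
    rw [hneg (ξ y), (main y hy.1 hy.2).2, neg_neg]
end

section
/- Let (P_0, P_1, P_2) be a symmetric Clifford system on ℝ^{2l} and let x ∈ ℝ^{2l} satisfy ‖x‖ = 1 and ⟨P_i x, x⟩ = 0 for i = 0, 1, 2. Then the six vectors x, P_0 x, P_1 x, P_2 x, P_0P_1 x, P_0P_1P_2 x form an orthonormal family in ℝ^{2l}. -/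
open scoped RealInnerProductSpace BigOperators

/-- For a symmetric Clifford system `(P 0, P 1, P 2)` on `ℝ^{2l}` (case
`m = 2`) and `x` a unit vector with `⟪P i x, x⟫ = 0` for `i = 0, 1, 2` (i.e. `x ∈ M₊`),
the six vectors `x, P 0 x, P 1 x, P 2 x, P 0 P 1 x, P 0 P 1 P 2 x` form an orthonormal
family. -/
theorem stmt10 (l : ℕ)
    (P : Fin 3 → EuclideanSpace ℝ (Fin (2 * l)) →ₗ[ℝ] EuclideanSpace ℝ (Fin (2 * l)))
    (hsym : ∀ i x y, ⟪P i x, y⟫ = ⟪x, P i y⟫)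
    (hcliff : ∀ i j y, P i (P j y) + P j (P i y) = if i = j then (2 : ℝ) • y else 0)
    (x : EuclideanSpace ℝ (Fin (2 * l)))
    (hx : ‖x‖ = 1)
    (hfocal : ∀ i, ⟪P i x, x⟫ = 0) :
    Orthonormal ℝ
      ![x, P 0 x, P 1 x, P 2 x, P 0 (P 1 x), P 0 (P 1 (P 2 x))] := by
  have hPP : ∀ i y, P i (P i y) = y := by
    intro i y
    have h := hcliff i i y
    rw [if_pos rfl, ← two_smul ℝ (P i (P i y))] at h
    exact smul_right_injective (EuclideanSpace ℝ (Fin (2 * l))) two_ne_zero h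
  have hA : ∀ i j (y : EuclideanSpace ℝ (Fin (2 * l))), i ≠ j →
      P i (P j y) = - P j (P i y) := by
    intro i j y hij
    have h := hcliff i j y
    rw [if_neg hij] at h
    exact eq_neg_of_add_eq_zero_left h
  have hO : ∀ i j (y : EuclideanSpace ℝ (Fin (2 * l))), i ≠ j →
      ⟪P i y, P j y⟫ = 0 := by
    intro i j y hij
    have h1 : ⟪P i y, P j y⟫ = ⟪y, P i (P j y)⟫ := hsym i y (P j y)
    rw [hA i j y hij, inner_neg_right, ← hsym j y (P i y), real_inner_comm] at h1
    rw [real_inner_comm]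
    linarith
  have hN : ∀ i (y : EuclideanSpace ℝ (Fin (2 * l))), ‖P i y‖ = ‖y‖ := by
    intro i y
    have h : ⟪P i y, P i y⟫ = ⟪y, y⟫ := by rw [hsym, hPP]
    have h2 := congrArg Real.sqrt h
    rwa [real_inner_self_eq_norm_mul_norm, real_inner_self_eq_norm_mul_norm,
      Real.sqrt_mul_self (norm_nonneg _), Real.sqrt_mul_self (norm_nonneg _)] at h2
  have hf : ∀ i, ⟪x, P i x⟫ = 0 := by
    intro i; rw [real_inner_comm]; exact hfocal i
  -- ⟪P 0 (P 1 x), P 2 x⟫ = 0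
  have hC : ⟪P 0 (P 1 x), P 2 x⟫ = 0 := by
    have h1 : ⟪P 0 (P 1 x), P 2 x⟫ = - ⟪P 0 (P 1 x), P 2 x⟫ := by
      calc ⟪P 0 (P 1 x), P 2 x⟫ = ⟪P 1 x, P 0 (P 2 x)⟫ := hsym 0 (P 1 x) (P 2 x)
        _ = - ⟪P 1 x, P 2 (P 0 x)⟫ := by
            rw [hA 0 2 x (by decide), inner_neg_right]
        _ = - ⟪P 2 (P 1 x), P 0 x⟫ := by rw [hsym 2 (P 1 x) (P 0 x)]
        _ = ⟪P 1 (P 2 x), P 0 x⟫ := by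
            rw [hA 2 1 x (by decide), inner_neg_left, neg_neg]
        _ = ⟪P 2 x, P 1 (P 0 x)⟫ := hsym 1 (P 2 x) (P 0 x)
        _ = - ⟪P 2 x, P 0 (P 1 x)⟫ := by
            rw [hA 1 0 x (by decide), inner_neg_right]
        _ = - ⟪P 0 (P 1 x), P 2 x⟫ := by rw [real_inner_comm]
    linarith
  have h04 : ⟪x, P 0 (P 1 x)⟫ = 0 := by
    rw [← hsym 0 x (P 1 x)]; exact hO 0 1 x (by decide)
  have h05 : ⟪x, P 0 (P 1 (P 2 x))⟫ = 0 := by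
    rw [← hsym 0 x (P 1 (P 2 x)), ← hsym 1 (P 0 x) (P 2 x),
      hA 1 0 x (by decide), inner_neg_left, hC, neg_zero]
  have h14 : ⟪P 0 x, P 0 (P 1 x)⟫ = 0 := by
    rw [hsym 0 x (P 0 (P 1 x)), hPP 0 (P 1 x)]; exact hf 1
  have h15 : ⟪P 0 x, P 0 (P 1 (P 2 x))⟫ = 0 := by
    rw [hsym 0 x (P 0 (P 1 (P 2 x))), hPP 0 (P 1 (P 2 x)), ← hsym 1 x (P 2 x)]
    exact hO 1 2 x (by decide)
  have h24 : ⟪P 1 x, P 0 (P 1 x)⟫ = 0 := by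
    rw [hsym 1 x (P 0 (P 1 x)), hA 1 0 (P 1 x) (by decide), inner_neg_right,
      hPP 1 x, hf 0, neg_zero]
  have h25 : ⟪P 1 x, P 0 (P 1 (P 2 x))⟫ = 0 := by
    rw [hsym 1 x (P 0 (P 1 (P 2 x))), hA 1 0 (P 1 (P 2 x)) (by decide),
      inner_neg_right, hPP 1 (P 2 x), ← hsym 0 x (P 2 x), hO 0 2 x (by decide), neg_zero]
  have h34 : ⟪P 2 x, P 0 (P 1 x)⟫ = 0 := by
    rw [real_inner_comm]; exact hC
  have h35 : ⟪P 2 x, P 0 (P 1 (P 2 x))⟫ = 0 := by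
    rw [← hsym 0 (P 2 x) (P 1 (P 2 x))]; exact hO 0 1 (P 2 x) (by decide)
  have h45 : ⟪P 0 (P 1 x), P 0 (P 1 (P 2 x))⟫ = 0 := by
    rw [hsym 0 (P 1 x) (P 0 (P 1 (P 2 x))), hPP 0 (P 1 (P 2 x)),
      hsym 1 x (P 1 (P 2 x)), hPP 1 (P 2 x)]
    exact hf 2
  constructor
  · intro i
    fin_cases i
    · exact hx
    · show ‖P 0 x‖ = 1; rw [hN]; exact hx
    · show ‖P 1 x‖ = 1; rw [hN]; exact hx
    · show ‖P 2 x‖ = 1; rw [hN]; exact hx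
    · show ‖P 0 (P 1 x)‖ = 1; rw [hN, hN]; exact hx
    · show ‖P 0 (P 1 (P 2 x))‖ = 1; rw [hN, hN, hN]; exact hx
  · intro i j hij
    fin_cases i <;> fin_cases j
    · exact absurd rfl hij
    · show ⟪x, P 0 x⟫ = 0
      exact hf 0
    · show ⟪x, P 1 x⟫ = 0
      exact hf 1
    · show ⟪x, P 2 x⟫ = 0
      exact hf 2
    · show ⟪x, P 0 (P 1 x)⟫ = 0
      exact h04
    · show ⟪x, P 0 (P 1 (P 2 x))⟫ = 0
      exact h05
    · show ⟪P 0 x, x⟫ = 0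
      exact hfocal 0
    · exact absurd rfl hij
    · show ⟪P 0 x, P 1 x⟫ = 0
      exact hO 0 1 x (by decide)
    · show ⟪P 0 x, P 2 x⟫ = 0
      exact hO 0 2 x (by decide)
    · show ⟪P 0 x, P 0 (P 1 x)⟫ = 0
      exact h14
    · show ⟪P 0 x, P 0 (P 1 (P 2 x))⟫ = 0
      exact h15
    · show ⟪P 1 x, x⟫ = 0
      exact hfocal 1
    · show ⟪P 1 x, P 0 x⟫ = 0
      rw [real_inner_comm]; exact hO 0 1 x (by decide)
    · exact absurd rfl hij
    · show ⟪P 1 x, P 2 x⟫ = 0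
      exact hO 1 2 x (by decide)
    · show ⟪P 1 x, P 0 (P 1 x)⟫ = 0
      exact h24
    · show ⟪P 1 x, P 0 (P 1 (P 2 x))⟫ = 0
      exact h25
    · show ⟪P 2 x, x⟫ = 0
      exact hfocal 2
    · show ⟪P 2 x, P 0 x⟫ = 0
      rw [real_inner_comm]; exact hO 0 2 x (by decide)
    · show ⟪P 2 x, P 1 x⟫ = 0
      rw [real_inner_comm]; exact hO 1 2 x (by decide)
    · exact absurd rfl hij
    · show ⟪P 2 x, P 0 (P 1 x)⟫ = 0
      exact h34
    · show ⟪P 2 x, P 0 (P 1 (P 2 x))⟫ = 0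
      exact h35
    · show ⟪P 0 (P 1 x), x⟫ = 0
      rw [real_inner_comm]; exact h04
    · show ⟪P 0 (P 1 x), P 0 x⟫ = 0
      rw [real_inner_comm]; exact h14
    · show ⟪P 0 (P 1 x), P 1 x⟫ = 0
      rw [real_inner_comm]; exact h24
    · show ⟪P 0 (P 1 x), P 2 x⟫ = 0
      rw [real_inner_comm]; exact h34
    · exact absurd rfl hij
    · show ⟪P 0 (P 1 x), P 0 (P 1 (P 2 x))⟫ = 0
      exact h45
    · show ⟪P 0 (P 1 (P 2 x)), x⟫ = 0
      rw [real_inner_comm]; exact h05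
    · show ⟪P 0 (P 1 (P 2 x)), P 0 x⟫ = 0
      rw [real_inner_comm]; exact h15
    · show ⟪P 0 (P 1 (P 2 x)), P 1 x⟫ = 0
      rw [real_inner_comm]; exact h25
    · show ⟪P 0 (P 1 (P 2 x)), P 2 x⟫ = 0
      rw [real_inner_comm]; exact h35
    · show ⟪P 0 (P 1 (P 2 x)), P 0 (P 1 x)⟫ = 0
      rw [real_inner_comm]; exact h45
    · exact absurd rfl hij
end

section
/- Let (P_0, P_1, P_2) be a symmetric Clifford system on ℝ^{2l}, let x ∈ ℝ^{2l} satisfy ‖x‖ = 1 and ⟨P_i x, x⟩ = 0 for i = 0, 1, 2, and let X ∈ ℝ^{2l} be orthogonal to each of the six vectors x, P_0 x, P_1 x, P_2 x, P_0P_1 x, P_0P_1P_2 x. Then P_0P_1 X is also orthogonal to each of these six vectors. -/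
open scoped RealInnerProductSpace BigOperators

/-- For a symmetric Clifford system `(P 0, P 1, P 2)` on `ℝ^{2l}`
(case `m = 2`), `x ∈ M₊` (i.e. `‖x‖ = 1` and `⟪P i x, x⟫ = 0` for all `i`), and `X`
orthogonal to the six vectors `x, P 0 x, P 1 x, P 2 x, P 0 P 1 x, P 0 P 1 P 2 x`
(i.e. `X` lies in the distribution `E`), the vector `P 0 P 1 X` is also orthogonal to
these six vectors (so `E` is invariant under `P 0 P 1`). -/
theorem stmt11 (l : ℕ)
    (P : Fin 3 → EuclideanSpace ℝ (Fin (2 * l)) →ₗ[ℝ] EuclideanSpace ℝ (Fin (2 * l)))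
    (hsym : ∀ i x y, ⟪P i x, y⟫ = ⟪x, P i y⟫)
    (hcliff : ∀ i j y, P i (P j y) + P j (P i y) = if i = j then (2 : ℝ) • y else 0)
    (x : EuclideanSpace ℝ (Fin (2 * l)))
    (hx : ‖x‖ = 1)
    (hfocal : ∀ i, ⟪P i x, x⟫ = 0)
    (X : EuclideanSpace ℝ (Fin (2 * l)))
    (hX0 : ⟪X, x⟫ = 0)
    (hX1 : ∀ i, ⟪X, P i x⟫ = 0)
    (hX2 : ⟪X, P 0 (P 1 x)⟫ = 0)
    (hX3 : ⟪X, P 0 (P 1 (P 2 x))⟫ = 0) :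
    ⟪P 0 (P 1 X), x⟫ = 0 ∧ (∀ i, ⟪P 0 (P 1 X), P i x⟫ = 0) ∧
      ⟪P 0 (P 1 X), P 0 (P 1 x)⟫ = 0 ∧ ⟪P 0 (P 1 X), P 0 (P 1 (P 2 x))⟫ = 0 := by
  have hsq : ∀ i y, P i (P i y) = y := by
    intro i y
    have h := hcliff i i y
    simp only [if_pos rfl] at h
    have h2 : (2 : ℝ) • P i (P i y) = (2 : ℝ) • y := by
      rw [two_smul]; exact h
    exact smul_right_injective _ (by norm_num) h2
  have hanti : ∀ i j, i ≠ j → ∀ y, P i (P j y) = - P j (P i y) := by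
    intro i j hij y
    have h := hcliff i j y
    simp only [if_neg hij] at h
    exact eq_neg_of_add_eq_zero_left h
  have h01 := hanti 0 1 (by decide)
  have move : ∀ v, ⟪P 0 (P 1 X), v⟫ = ⟪X, P 1 (P 0 v)⟫ := by
    intro v
    rw [hsym 0, hsym 1]
  refine ⟨?_, ?_, ?_, ?_⟩
  · rw [move, hanti 1 0 (by decide) x]
    simp [inner_neg_right, hX2]
  · intro i
    fin_cases i
    · show ⟪P 0 (P 1 X), P 0 x⟫ = 0
      rw [move, hsq 0]
      exact hX1 1
    · show ⟪P 0 (P 1 X), P 1 x⟫ = 0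
      rw [move, hanti 0 1 (by decide) x, map_neg, hsq 1]
      simp [inner_neg_right, hX1 0]
    · show ⟪P 0 (P 1 X), P 2 x⟫ = 0
      rw [move, hanti 1 0 (by decide) (P 2 x)]
      simp [inner_neg_right, hX3]
  · rw [move, hsq 0, hsq 1]
    exact hX0
  · rw [move, hsq 0, hsq 1]
    exact hX1 2
end

section
/- Let (P_0, P_1, P_2, P_3, P_4) be a symmetric Clifford system on ℝ^{2l} satisfying the definite condition P_0P_1P_2P_3P_4 = ε · id with ε = 1 or ε = −1, let x ∈ ℝ^{2l} satisfy ‖x‖ = 1 and ⟨P_i x, x⟩ = 0 for i = 0, …, 4, and let X ∈ ℝ^{2l} be orthogonal to each of the ten vectors x, P_0 x, …, P_4 x, P_0P_1 x, P_2P_3 x, P_2P_4 x, P_3P_4 x. Then P_0P_1 X is also orthogonal to each of these ten vectors. -/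
open scoped RealInnerProductSpace BigOperators

/-- For a symmetric Clifford system `(P 0, …, P 4)` on `ℝ^{2l}` in the
definite case (`P 0 P 1 P 2 P 3 P 4 = ε • id`, `ε = ±1`), `x ∈ M₊` (`‖x‖ = 1`,
`⟪P i x, x⟫ = 0` for all `i`), and `X` orthogonal to the ten vectors
`x, P 0 x, …, P 4 x, P 0 P 1 x, P 2 P 3 x, P 2 P 4 x, P 3 P 4 x` (i.e. `X` lies in the
distribution `V`), the vector `P 0 P 1 X` is also orthogonal to these ten vectors
(so `V` is invariant under `P 0 P 1`). -/
theorem stmt13 (l : ℕ)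
    (P : Fin 5 → EuclideanSpace ℝ (Fin (2 * l)) →ₗ[ℝ] EuclideanSpace ℝ (Fin (2 * l)))
    (hsym : ∀ i x y, ⟪P i x, y⟫ = ⟪x, P i y⟫)
    (hcliff : ∀ i j y, P i (P j y) + P j (P i y) = if i = j then (2 : ℝ) • y else 0)
    (ε : ℝ) (hε : ε = 1 ∨ ε = -1)
    (hdef : ∀ y, P 0 (P 1 (P 2 (P 3 (P 4 y)))) = ε • y)
    (x : EuclideanSpace ℝ (Fin (2 * l)))
    (hx : ‖x‖ = 1)
    (hfocal : ∀ i, ⟪P i x, x⟫ = 0)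
    (X : EuclideanSpace ℝ (Fin (2 * l)))
    (hX0 : ⟪X, x⟫ = 0)
    (hX1 : ∀ i, ⟪X, P i x⟫ = 0)
    (hX2 : ⟪X, P 0 (P 1 x)⟫ = 0)
    (hX3 : ⟪X, P 2 (P 3 x)⟫ = 0)
    (hX4 : ⟪X, P 2 (P 4 x)⟫ = 0)
    (hX5 : ⟪X, P 3 (P 4 x)⟫ = 0) :
    ⟪P 0 (P 1 X), x⟫ = 0 ∧ (∀ i, ⟪P 0 (P 1 X), P i x⟫ = 0) ∧
      ⟪P 0 (P 1 X), P 0 (P 1 x)⟫ = 0 ∧ ⟪P 0 (P 1 X), P 2 (P 3 x)⟫ = 0 ∧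
      ⟪P 0 (P 1 X), P 2 (P 4 x)⟫ = 0 ∧ ⟪P 0 (P 1 X), P 3 (P 4 x)⟫ = 0 := by
  have hsq : ∀ i y, P i (P i y) = y := by
    intro i y
    have h := hcliff i i y
    rw [if_pos rfl] at h
    have h2 : (2 : ℝ) • P i (P i y) = (2 : ℝ) • y := by rw [two_smul]; exact h
    exact smul_right_injective _ (two_ne_zero : (2:ℝ) ≠ 0) h2
  have hanti : ∀ i j, i ≠ j → ∀ y, P i (P j y) = - P j (P i y) := by
    intro i j hij y
    have h := hcliff i j y
    rw [if_neg hij] at h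
    exact eq_neg_of_add_eq_zero_left h
  have hP01 : ∀ y, P 0 (P 1 y) = ε • P 4 (P 3 (P 2 y)) := by
    intro y
    have h := hdef (P 4 (P 3 (P 2 y)))
    rw [hsq 4, hsq 3, hsq 2] at h
    exact h
  have h_a : ∀ y, P 1 (P 0 y) = -(ε • P 4 (P 3 (P 2 y))) := by
    intro y
    rw [hanti 1 0 (by decide), hP01]
  have key : ∀ v, ⟪P 0 (P 1 X), v⟫ = ⟪X, P 1 (P 0 v)⟫ := fun v =>
    (hsym 0 _ v).trans (hsym 1 _ _)
  have hεne : ε ≠ 0 := by rcases hε with h | h <;> rw [h] <;> norm_num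
  have hX2' : ⟪X, P 4 (P 3 (P 2 x))⟫ = 0 := by
    have h := hX2
    rw [hP01, real_inner_smul_right] at h
    exact (mul_eq_zero.mp h).resolve_left hεne
  have hX3' : ⟪X, P 3 (P 2 x)⟫ = 0 := by
    rw [hanti 3 2 (by decide)]; simp [inner_neg_right, hX3]
  have hX4' : ⟪X, P 4 (P 2 x)⟫ = 0 := by
    rw [hanti 4 2 (by decide)]; simp [inner_neg_right, hX4]
  have hX5' : ⟪X, P 4 (P 3 x)⟫ = 0 := by
    rw [hanti 4 3 (by decide)]; simp [inner_neg_right, hX5]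
  have h23 : (2 : Fin 5) ≠ 3 := by decide
  have h24 : (2 : Fin 5) ≠ 4 := by decide
  have h34 : (3 : Fin 5) ≠ 4 := by decide
  refine ⟨?_, ?_, ?_, ?_, ?_, ?_⟩
  · rw [key, h_a]
    simp [inner_neg_right, inner_smul_right, hX2']
  · intro i
    fin_cases i
    · show ⟪P 0 (P 1 X), P 0 x⟫ = 0
      rw [key, hsq 0]
      exact hX1 1
    · show ⟪P 0 (P 1 X), P 1 x⟫ = 0
      rw [key, hanti 0 1 (by decide), map_neg, hsq 1]
      simp [inner_neg_right, hX1 0]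
    · show ⟪P 0 (P 1 X), P 2 x⟫ = 0
      rw [key, h_a]
      simp only [hanti 2 3 h23, hanti 2 4 h24, hanti 3 4 h34, hsq, map_neg, neg_neg]
      simp [inner_neg_right, inner_smul_right, hX5', hX3', hX4', hX1, hX2', hX3, hX4, hX5]
    · show ⟪P 0 (P 1 X), P 3 x⟫ = 0
      rw [key, h_a]
      simp only [hanti 2 3 h23, hanti 2 4 h24, hanti 3 4 h34, hsq, map_neg, neg_neg]
      simp [inner_neg_right, inner_smul_right, hX5', hX3', hX4', hX1, hX2', hX3, hX4, hX5]
    · show ⟪P 0 (P 1 X), P 4 x⟫ = 0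
      rw [key, h_a]
      simp only [hanti 2 3 h23, hanti 2 4 h24, hanti 3 4 h34, hsq, map_neg, neg_neg]
      simp [inner_neg_right, inner_smul_right, hX5', hX3', hX4', hX1, hX2', hX3, hX4, hX5]
  · rw [key, hsq 0, hsq 1]
    exact hX0
  · rw [key, h_a]
    simp only [hanti 2 3 h23, hanti 2 4 h24, hanti 3 4 h34, hsq, map_neg, neg_neg]
    simp [inner_neg_right, inner_smul_right, hX5', hX3', hX4', hX1, hX2', hX3, hX4, hX5]
  · rw [key, h_a]
    simp only [hanti 2 3 h23, hanti 2 4 h24, hanti 3 4 h34, hsq, map_neg, neg_neg]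
    simp [inner_neg_right, inner_smul_right, hX5', hX3', hX4', hX1, hX2', hX3, hX4, hX5]
  · rw [key, h_a]
    simp only [hanti 2 3 h23, hanti 2 4 h24, hanti 3 4 h34, hsq, map_neg, neg_neg]
    simp [inner_neg_right, inner_smul_right, hX5', hX3', hX4', hX1, hX2', hX3, hX4, hX5]
end

section
/- Let (P_0, P_1, P_2) be a symmetric Clifford system on ℝ^{2l}, and let X, Y : ℝ^{2l} → ℝ^{2l} be differentiable vector fields such that for every p ∈ ℝ^{2l}, both X(p) and Y(p) are orthogonal to each of the six vectors p, P_0 p, P_1 p, P_2 p, P_0P_1 p, P_0P_1P_2 p. Define W := [P_0P_1 ∘ X, Y] + [X, P_0P_1 ∘ Y], where [V, U](p) := (DU)_p(V(p)) − (DV)_p(U(p)). Then for every p ∈ ℝ^{2l}, ⟨W(p), P_0P_1 p⟩ = 0 and ⟨W(p), P_0P_1P_2 p⟩ = 0. -/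
open scoped RealInnerProductSpace BigOperators

/-- The Lie bracket of two vector fields `V W : E → E` on a normed space,
`[V, W](q) = (DW)_q (V q) − (DV)_q (W q)`, with `D` the Fréchet derivative. -/
noncomputable def lieBracket {E : Type*} [NormedAddCommGroup E] [NormedSpace ℝ E]
    (V W : E → E) (q : E) : E :=
  fderiv ℝ W q (V q) - fderiv ℝ V q (W q)

lemma deriv_inner_zero {n : ℕ} (f : EuclideanSpace ℝ (Fin n) → EuclideanSpace ℝ (Fin n))
    (hf : Differentiable ℝ f)
    (L : EuclideanSpace ℝ (Fin n) →L[ℝ] EuclideanSpace ℝ (Fin n))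
    (h : ∀ q, ⟪f q, L q⟫ = 0) (p v : EuclideanSpace ℝ (Fin n)) :
    ⟪fderiv ℝ f p v, L p⟫ = -⟪f p, L v⟫ := by
  have hg := ((hf p).hasFDerivAt).inner ℝ (L.hasFDerivAt (x := p))
  have h0 : (fun q => ⟪f q, L q⟫) = fun _ : EuclideanSpace ℝ (Fin n) => (0:ℝ) := funext h
  rw [h0] at hg
  have hu := hg.unique (hasFDerivAt_const 0 p)
  have := ContinuousLinearMap.ext_iff.1 hu v
  simp only [ContinuousLinearMap.comp_apply, ContinuousLinearMap.prod_apply,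
    fderivInnerCLM_apply, ContinuousLinearMap.coe_zero, Pi.zero_apply,
    ContinuousLinearMap.zero_apply, ContinuousLinearMap.coe_coe] at this
  linarith

/-- Let `(P 0, P 1, P 2)` be a symmetric Clifford system on `ℝ^{2l}` and
let `X, Y` be differentiable vector fields whose values at every `p` are orthogonal to the
six vectors `p, P 0 p, P 1 p, P 2 p, P 0 P 1 p, P 0 P 1 P 2 p`. Then
`W := [P 0 P 1 ∘ X, Y] + [X, P 0 P 1 ∘ Y]` satisfies `⟪W p, P 0 P 1 p⟫ = 0` and
`⟪W p, P 0 P 1 P 2 p⟫ = 0` for every `p`. -/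
theorem stmt15 (l : ℕ)
    (P : Fin 3 → EuclideanSpace ℝ (Fin (2 * l)) →ₗ[ℝ] EuclideanSpace ℝ (Fin (2 * l)))
    (hsym : ∀ i x y, ⟪P i x, y⟫ = ⟪x, P i y⟫)
    (hcliff : ∀ i j y, P i (P j y) + P j (P i y) = if i = j then (2 : ℝ) • y else 0)
    (X Y : EuclideanSpace ℝ (Fin (2 * l)) → EuclideanSpace ℝ (Fin (2 * l)))
    (hXd : Differentiable ℝ X) (hYd : Differentiable ℝ Y)
    (hX : ∀ p, ⟪X p, p⟫ = 0 ∧ (∀ i, ⟪X p, P i p⟫ = 0) ∧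
      ⟪X p, P 0 (P 1 p)⟫ = 0 ∧ ⟪X p, P 0 (P 1 (P 2 p))⟫ = 0)
    (hY : ∀ p, ⟪Y p, p⟫ = 0 ∧ (∀ i, ⟪Y p, P i p⟫ = 0) ∧
      ⟪Y p, P 0 (P 1 p)⟫ = 0 ∧ ⟪Y p, P 0 (P 1 (P 2 p))⟫ = 0)
    (W : EuclideanSpace ℝ (Fin (2 * l)) → EuclideanSpace ℝ (Fin (2 * l)))
    (hW : ∀ p, W p = lieBracket (fun q => P 0 (P 1 (X q))) Y p
                      + lieBracket X (fun q => P 0 (P 1 (Y q))) p) :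
    ∀ p, ⟪W p, P 0 (P 1 p)⟫ = 0 ∧ ⟪W p, P 0 (P 1 (P 2 p))⟫ = 0 := by
  -- algebraic consequences of the Clifford relations
  have hsq : ∀ i (y : EuclideanSpace ℝ (Fin (2 * l))), P i (P i y) = y := by
    intro i y
    have h := hcliff i i y
    rw [if_pos rfl, two_smul] at h
    have h2 : (2:ℝ) • P i (P i y) = (2:ℝ) • y := by
      rw [two_smul, two_smul]; linear_combination (norm := module) h
    exact smul_right_injective _ (by norm_num) h2
  have hanti : ∀ i j, i ≠ j → ∀ y : EuclideanSpace ℝ (Fin (2 * l)),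
      P i (P j y) = - P j (P i y) := by
    intro i j hij y
    have h := hcliff i j y
    rw [if_neg hij] at h
    linear_combination (norm := module) h
  -- A := P0 P1, B := P0 P1 P2 as continuous linear maps
  let LA := LinearMap.toContinuousLinearMap ((P 0) ∘ₗ (P 1))
  let LB := LinearMap.toContinuousLinearMap ((P 0) ∘ₗ (P 1) ∘ₗ (P 2))
  let L2 := LinearMap.toContinuousLinearMap (P 2)
  have hLA : ∀ q : EuclideanSpace ℝ (Fin (2 * l)), LA q = P 0 (P 1 q) := fun q => rfl
  have hLB : ∀ q : EuclideanSpace ℝ (Fin (2 * l)), LB q = P 0 (P 1 (P 2 q)) := fun q => rfl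
  have hL2 : ∀ q : EuclideanSpace ℝ (Fin (2 * l)), L2 q = P 2 q := fun q => rfl
  -- A² = -1 and B ∘ A = -P2 pointwise
  have hAA : ∀ x : EuclideanSpace ℝ (Fin (2 * l)), P 0 (P 1 (P 0 (P 1 x))) = -x := by
    intro x
    rw [hanti 1 0 (by decide), hsq 1, map_neg, hsq 0]
  have hBA : ∀ x : EuclideanSpace ℝ (Fin (2 * l)),
      P 0 (P 1 (P 2 (P 0 (P 1 x)))) = - P 2 x := by
    intro x
    have h1 : P 2 (P 0 (P 1 x)) = P 0 (P 1 (P 2 x)) := by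
      rw [hanti 2 0 (by decide), hanti 2 1 (by decide), map_neg, neg_neg]
    rw [h1, hAA]
  -- adjoint of A
  have hadj : ∀ u w : EuclideanSpace ℝ (Fin (2 * l)),
      ⟪P 0 (P 1 u), w⟫ = ⟪u, P 1 (P 0 w)⟫ := by
    intro u w; rw [hsym 0, hsym 1]
  -- derivative identities
  have dXA : ∀ p v, ⟪fderiv ℝ X p v, P 0 (P 1 p)⟫ = -⟪X p, P 0 (P 1 v)⟫ := by
    intro p v
    have := deriv_inner_zero X hXd LA (fun q => by rw [hLA]; exact (hX q).2.2.1) p v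
    rwa [hLA, hLA] at this
  have dYA : ∀ p v, ⟪fderiv ℝ Y p v, P 0 (P 1 p)⟫ = -⟪Y p, P 0 (P 1 v)⟫ := by
    intro p v
    have := deriv_inner_zero Y hYd LA (fun q => by rw [hLA]; exact (hY q).2.2.1) p v
    rwa [hLA, hLA] at this
  have dXB : ∀ p v, ⟪fderiv ℝ X p v, P 0 (P 1 (P 2 p))⟫ = -⟪X p, P 0 (P 1 (P 2 v))⟫ := by
    intro p v
    have := deriv_inner_zero X hXd LB (fun q => by rw [hLB]; exact (hX q).2.2.2) p v
    rwa [hLB, hLB] at this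
  have dYB : ∀ p v, ⟪fderiv ℝ Y p v, P 0 (P 1 (P 2 p))⟫ = -⟪Y p, P 0 (P 1 (P 2 v))⟫ := by
    intro p v
    have := deriv_inner_zero Y hYd LB (fun q => by rw [hLB]; exact (hY q).2.2.2) p v
    rwa [hLB, hLB] at this
  have dXid : ∀ p v, ⟪fderiv ℝ X p v, p⟫ = -⟪X p, v⟫ := by
    intro p v
    have := deriv_inner_zero X hXd (ContinuousLinearMap.id ℝ _) (fun q => (hX q).1) p v
    simpa using this
  have dYid : ∀ p v, ⟪fderiv ℝ Y p v, p⟫ = -⟪Y p, v⟫ := by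
    intro p v
    have := deriv_inner_zero Y hYd (ContinuousLinearMap.id ℝ _) (fun q => (hY q).1) p v
    simpa using this
  have dX2 : ∀ p v, ⟪fderiv ℝ X p v, P 2 p⟫ = -⟪X p, P 2 v⟫ := by
    intro p v
    have := deriv_inner_zero X hXd L2 (fun q => by rw [hL2]; exact (hX q).2.1 2) p v
    rwa [hL2, hL2] at this
  have dY2 : ∀ p v, ⟪fderiv ℝ Y p v, P 2 p⟫ = -⟪Y p, P 2 v⟫ := by
    intro p v
    have := deriv_inner_zero Y hYd L2 (fun q => by rw [hL2]; exact (hY q).2.1 2) p v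
    rwa [hL2, hL2] at this
  -- chain rule for the composed vector fields
  have hfX : ∀ p, fderiv ℝ (fun q => P 0 (P 1 (X q))) p = LA.comp (fderiv ℝ X p) := by
    intro p
    exact (LA.hasFDerivAt.comp p (hXd p).hasFDerivAt).fderiv
  have hfY : ∀ p, fderiv ℝ (fun q => P 0 (P 1 (Y q))) p = LA.comp (fderiv ℝ Y p) := by
    intro p
    exact (LA.hasFDerivAt.comp p (hYd p).hasFDerivAt).fderiv
  intro p
  have hWp : W p = (fderiv ℝ Y p (P 0 (P 1 (X p))) - P 0 (P 1 (fderiv ℝ X p (Y p))))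
      + (P 0 (P 1 (fderiv ℝ Y p (X p))) - fderiv ℝ X p (P 0 (P 1 (Y p)))) := by
    rw [hW p]
    unfold lieBracket
    rw [hfX p, hfY p]
    rfl
  constructor
  · have t1 : ⟪fderiv ℝ Y p (P 0 (P 1 (X p))), P 0 (P 1 p)⟫ = ⟪Y p, X p⟫ := by
      rw [dYA, hAA, inner_neg_right, neg_neg]
    have t2 : ⟪P 0 (P 1 (fderiv ℝ X p (Y p))), P 0 (P 1 p)⟫ = -⟪X p, Y p⟫ := by
      rw [hadj, hsq 0, hsq 1]; exact dXid p (Y p)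
    have t3 : ⟪P 0 (P 1 (fderiv ℝ Y p (X p))), P 0 (P 1 p)⟫ = -⟪Y p, X p⟫ := by
      rw [hadj, hsq 0, hsq 1]; exact dYid p (X p)
    have t4 : ⟪fderiv ℝ X p (P 0 (P 1 (Y p))), P 0 (P 1 p)⟫ = ⟪X p, Y p⟫ := by
      rw [dXA, hAA, inner_neg_right, neg_neg]
    rw [hWp, inner_add_left, inner_sub_left, inner_sub_left, t1, t2, t3, t4]
    have := real_inner_comm (X p) (Y p)
    linarith
  · have s1 : ⟪fderiv ℝ Y p (P 0 (P 1 (X p))), P 0 (P 1 (P 2 p))⟫ = ⟪Y p, P 2 (X p)⟫ := by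
      rw [dYB, hBA, inner_neg_right, neg_neg]
    have s2 : ⟪P 0 (P 1 (fderiv ℝ X p (Y p))), P 0 (P 1 (P 2 p))⟫ = -⟪X p, P 2 (Y p)⟫ := by
      rw [hadj, hsq 0, hsq 1]; exact dX2 p (Y p)
    have s3 : ⟪P 0 (P 1 (fderiv ℝ Y p (X p))), P 0 (P 1 (P 2 p))⟫ = -⟪Y p, P 2 (X p)⟫ := by
      rw [hadj, hsq 0, hsq 1]; exact dY2 p (X p)
    have s4 : ⟪fderiv ℝ X p (P 0 (P 1 (Y p))), P 0 (P 1 (P 2 p))⟫ = ⟪X p, P 2 (Y p)⟫ := by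
      rw [dXB, hBA, inner_neg_right, neg_neg]
    rw [hWp, inner_add_left, inner_sub_left, inner_sub_left, s1, s2, s3, s4]
    ring
end

section
/- Let (P_0, P_1, P_2) be a symmetric Clifford system on ℝ^{2l}, and let X : ℝ^{2l} → ℝ^{2l} be a differentiable vector field such that for every p ∈ ℝ^{2l}, X(p) is orthogonal to each of the six vectors p, P_0 p, P_1 p, P_2 p, P_0P_1 p, P_0P_1P_2 p. Define the linear vector fields ζ(p) := P_0P_1P_2 p and η(p) := P_0P_1 p, and set W' := [ζ, X] + [η, P_0P_1 ∘ X], where [V, U](p) := (DU)_p(V(p)) − (DV)_p(U(p)). Then for every p ∈ ℝ^{2l}, ⟨W'(p), P_0P_1 p⟩ = 0 and ⟨W'(p), P_0P_1P_2 p⟩ = 0. -/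
open scoped RealInnerProductSpace BigOperators

/-- Differentiating an identically-zero inner product `⟪X q, L q⟫ = 0` (with `L` a
continuous linear map) gives `⟪(DX)_p v, L p⟫ + ⟪X p, L v⟫ = 0`. -/
lemma key_inner {E : Type*} [NormedAddCommGroup E] [InnerProductSpace ℝ E]
    (X : E → E) (hXd : Differentiable ℝ X) (L : E →L[ℝ] E)
    (h : ∀ q, ⟪X q, L q⟫ = 0) (p v : E) :
    ⟪fderiv ℝ X p v, L p⟫ + ⟪X p, L v⟫ = 0 := by
  have h1 := (hXd p).hasFDerivAt.inner ℝ (L.hasFDerivAt (x := p))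
  have h0 : (fun q => ⟪X q, L q⟫) = fun _ : E => (0 : ℝ) := funext h
  rw [h0] at h1
  have h2 := h1.unique (hasFDerivAt_const 0 p)
  have h3 := congrFun (congrArg DFunLike.coe h2) v
  simp [fderivInnerCLM_apply] at h3
  linarith

/-- Let `(P 0, P 1, P 2)` be a symmetric Clifford system on `ℝ^{2l}` and
let `X` be a differentiable vector field whose value at every `p` is orthogonal to the six
vectors `p, P 0 p, P 1 p, P 2 p, P 0 P 1 p, P 0 P 1 P 2 p`. With the linear vector fields
`ζ(p) = P 0 P 1 P 2 p` and `η(p) = P 0 P 1 p`, the field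
`W' := [ζ, X] + [η, P 0 P 1 ∘ X]` satisfies `⟪W' p, P 0 P 1 p⟫ = 0` and
`⟪W' p, P 0 P 1 P 2 p⟫ = 0` for every `p`. -/
theorem stmt16 (l : ℕ)
    (P : Fin 3 → EuclideanSpace ℝ (Fin (2 * l)) →ₗ[ℝ] EuclideanSpace ℝ (Fin (2 * l)))
    (hsym : ∀ i x y, ⟪P i x, y⟫ = ⟪x, P i y⟫)
    (hcliff : ∀ i j y, P i (P j y) + P j (P i y) = if i = j then (2 : ℝ) • y else 0)
    (X : EuclideanSpace ℝ (Fin (2 * l)) → EuclideanSpace ℝ (Fin (2 * l)))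
    (hXd : Differentiable ℝ X)
    (hX : ∀ p, ⟪X p, p⟫ = 0 ∧ (∀ i, ⟪X p, P i p⟫ = 0) ∧
      ⟪X p, P 0 (P 1 p)⟫ = 0 ∧ ⟪X p, P 0 (P 1 (P 2 p))⟫ = 0)
    (ζ η W' : EuclideanSpace ℝ (Fin (2 * l)) → EuclideanSpace ℝ (Fin (2 * l)))
    (hζ : ∀ p, ζ p = P 0 (P 1 (P 2 p)))
    (hη : ∀ p, η p = P 0 (P 1 p))
    (hW' : ∀ p, W' p = lieBracket ζ X p + lieBracket η (fun q => P 0 (P 1 (X q))) p) :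
    ∀ p, ⟪W' p, P 0 (P 1 p)⟫ = 0 ∧ ⟪W' p, P 0 (P 1 (P 2 p))⟫ = 0 := by
  -- basic Clifford algebra
  have hP : ∀ i (y : EuclideanSpace ℝ (Fin (2 * l))), P i (P i y) = y := by
    intro i y
    have h := hcliff i i y
    rw [if_pos rfl] at h
    have h2 : (2 : ℝ) • P i (P i y) = (2 : ℝ) • y := by
      rw [two_smul]; exact h
    exact smul_right_injective _ two_ne_zero h2
  have hAnti : ∀ i j y, i ≠ j → P i (P j y) = -(P j (P i y)) := by
    intro i j y hij
    have h := hcliff i j y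
    rw [if_neg hij] at h
    exact eq_neg_of_add_eq_zero_left h
  -- (P0 P1)^2 = -1
  have h2id : ∀ z, P 0 (P 1 (P 0 (P 1 z))) = -z := by
    intro z
    rw [hAnti 1 0 (P 1 z) (by decide), map_neg, hP 1, hP 0]
  -- P2 commutes with P0 P1
  have hcomm : ∀ z, P 2 (P 0 (P 1 z)) = P 0 (P 1 (P 2 z)) := by
    intro z
    rw [hAnti 2 0 (P 1 z) (by decide), hAnti 2 1 z (by decide), map_neg, neg_neg]
  -- reversal of P0 P1 P2
  have hrev : ∀ y, P 2 (P 1 (P 0 y)) = -(P 0 (P 1 (P 2 y))) := by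
    intro y
    rw [hAnti 2 1 (P 0 y) (by decide), hAnti 2 0 y (by decide), map_neg, neg_neg,
      hAnti 1 0 (P 2 y) (by decide)]
  -- skewness of A = P0 P1 and B = P0 P1 P2
  have hAskew : ∀ x y, ⟪P 0 (P 1 x), y⟫ = -⟪x, P 0 (P 1 y)⟫ := by
    intro x y
    rw [hsym 0, hsym 1, hAnti 1 0 y (by decide), inner_neg_right]
  have hBskew : ∀ x y, ⟪P 0 (P 1 (P 2 x)), y⟫ = -⟪x, P 0 (P 1 (P 2 y))⟫ := by
    intro x y
    rw [hsym 0, hsym 1, hsym 2, hrev, inner_neg_right]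
  intro p
  -- key differentiated orthogonality relations
  have kI : ∀ v, ⟪fderiv ℝ X p v, p⟫ + ⟪X p, v⟫ = 0 := by
    intro v
    have := key_inner X hXd (ContinuousLinearMap.id ℝ (EuclideanSpace ℝ (Fin (2 * l))))
      (fun q => (hX q).1) p v
    simpa only [ContinuousLinearMap.id_apply, ContinuousLinearMap.coe_comp', Function.comp_apply, LinearMap.coe_toContinuousLinearMap'] using this
  have kP2 : ∀ v, ⟪fderiv ℝ X p v, P 2 p⟫ + ⟪X p, P 2 v⟫ = 0 := by
    intro v
    have := key_inner X hXd (LinearMap.toContinuousLinearMap (P 2))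
      (fun q => by simp only [ContinuousLinearMap.id_apply, ContinuousLinearMap.coe_comp', Function.comp_apply, LinearMap.coe_toContinuousLinearMap']; exact (hX q).2.1 2) p v
    simpa only [ContinuousLinearMap.id_apply, ContinuousLinearMap.coe_comp', Function.comp_apply, LinearMap.coe_toContinuousLinearMap'] using this
  have kA : ∀ v, ⟪fderiv ℝ X p v, P 0 (P 1 p)⟫ + ⟪X p, P 0 (P 1 v)⟫ = 0 := by
    intro v
    have := key_inner X hXd
      ((LinearMap.toContinuousLinearMap (P 0)).comp (LinearMap.toContinuousLinearMap (P 1)))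
      (fun q => by simp only [ContinuousLinearMap.id_apply, ContinuousLinearMap.coe_comp', Function.comp_apply, LinearMap.coe_toContinuousLinearMap']; exact (hX q).2.2.1) p v
    simpa only [ContinuousLinearMap.id_apply, ContinuousLinearMap.coe_comp', Function.comp_apply, LinearMap.coe_toContinuousLinearMap'] using this
  have kB : ∀ v,
      ⟪fderiv ℝ X p v, P 0 (P 1 (P 2 p))⟫ + ⟪X p, P 0 (P 1 (P 2 v))⟫ = 0 := by
    intro v
    have := key_inner X hXd
      ((LinearMap.toContinuousLinearMap (P 0)).comp
        ((LinearMap.toContinuousLinearMap (P 1)).comp (LinearMap.toContinuousLinearMap (P 2))))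
      (fun q => by simp only [ContinuousLinearMap.id_apply, ContinuousLinearMap.coe_comp', Function.comp_apply, LinearMap.coe_toContinuousLinearMap']; exact (hX q).2.2.2) p v
    simpa only [ContinuousLinearMap.id_apply, ContinuousLinearMap.coe_comp', Function.comp_apply, LinearMap.coe_toContinuousLinearMap'] using this
  -- derivatives of the linear vector fields
  have hDζ : ∀ x, fderiv ℝ ζ p x = P 0 (P 1 (P 2 x)) := by
    intro x
    have hf : ζ = ⇑((LinearMap.toContinuousLinearMap (P 0)).comp
        ((LinearMap.toContinuousLinearMap (P 1)).comp (LinearMap.toContinuousLinearMap (P 2)))) := by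
      funext q; rw [hζ q]; simp only [ContinuousLinearMap.id_apply, ContinuousLinearMap.coe_comp', Function.comp_apply, LinearMap.coe_toContinuousLinearMap']
    rw [hf, ContinuousLinearMap.fderiv]
    simp only [ContinuousLinearMap.id_apply, ContinuousLinearMap.coe_comp', Function.comp_apply, LinearMap.coe_toContinuousLinearMap']
  have hDη : ∀ x, fderiv ℝ η p x = P 0 (P 1 x) := by
    intro x
    have hf : η = ⇑((LinearMap.toContinuousLinearMap (P 0)).comp
        (LinearMap.toContinuousLinearMap (P 1))) := by
      funext q; rw [hη q]; simp only [ContinuousLinearMap.id_apply, ContinuousLinearMap.coe_comp', Function.comp_apply, LinearMap.coe_toContinuousLinearMap']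
    rw [hf, ContinuousLinearMap.fderiv]
    simp only [ContinuousLinearMap.id_apply, ContinuousLinearMap.coe_comp', Function.comp_apply, LinearMap.coe_toContinuousLinearMap']
  have hDAX : ∀ x,
      fderiv ℝ (fun q => P 0 (P 1 (X q))) p x = P 0 (P 1 (fderiv ℝ X p x)) := by
    intro x
    have h := (((LinearMap.toContinuousLinearMap (P 0)).comp
        (LinearMap.toContinuousLinearMap (P 1))).hasFDerivAt (x := X p)).comp p
        (hXd p).hasFDerivAt
    have hf : (fun q => P 0 (P 1 (X q)))
        = ⇑((LinearMap.toContinuousLinearMap (P 0)).comp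
            (LinearMap.toContinuousLinearMap (P 1))) ∘ X := by
      funext q; simp only [ContinuousLinearMap.id_apply, ContinuousLinearMap.coe_comp', Function.comp_apply, LinearMap.coe_toContinuousLinearMap']
    rw [hf, h.fderiv]
    simp only [ContinuousLinearMap.id_apply, ContinuousLinearMap.coe_comp', Function.comp_apply, LinearMap.coe_toContinuousLinearMap']
  -- expand W'
  have hWp : W' p = fderiv ℝ X p (P 0 (P 1 (P 2 p))) - P 0 (P 1 (P 2 (X p)))
      + (P 0 (P 1 (fderiv ℝ X p (P 0 (P 1 p)))) + X p) := by
    rw [hW' p]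
    simp only [lieBracket]
    rw [hζ p, hη p, hDζ (X p), hDη (P 0 (P 1 (X p))), hDAX (P 0 (P 1 p)),
      h2id (X p), sub_neg_eq_add]
  constructor
  · -- inner with P0 P1 p
    have f1 : ⟪fderiv ℝ X p (P 0 (P 1 (P 2 p))), P 0 (P 1 p)⟫ = 0 := by
      have h := kA (P 0 (P 1 (P 2 p)))
      rw [h2id (P 2 p), inner_neg_right, (hX p).2.1 2] at h
      linarith
    have f2 : ⟪P 0 (P 1 (P 2 (X p))), P 0 (P 1 p)⟫ = 0 := by
      rw [hBskew, hcomm p, h2id (P 2 p), inner_neg_right, (hX p).2.1 2]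
      simp
    have f3 : ⟪P 0 (P 1 (fderiv ℝ X p (P 0 (P 1 p)))), P 0 (P 1 p)⟫ = 0 := by
      rw [hAskew, h2id p, inner_neg_right]
      have h := kI (P 0 (P 1 p))
      rw [(hX p).2.2.1] at h
      linarith
    rw [hWp, inner_add_left, inner_sub_left, inner_add_left, f1, f2, f3, (hX p).2.2.1]
    ring
  · -- inner with P0 P1 P2 p
    have g1 : ⟪fderiv ℝ X p (P 0 (P 1 (P 2 p))), P 0 (P 1 (P 2 p))⟫ = 0 := by
      have h := kB (P 0 (P 1 (P 2 p)))
      rw [hcomm (P 2 p), hP 2, h2id p, inner_neg_right, (hX p).1] at h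
      linarith
    have g2 : ⟪P 0 (P 1 (P 2 (X p))), P 0 (P 1 (P 2 p))⟫ = 0 := by
      rw [hBskew, hcomm (P 2 p), hP 2, h2id p, inner_neg_right, (hX p).1]
      simp
    have g3 : ⟪P 0 (P 1 (fderiv ℝ X p (P 0 (P 1 p)))), P 0 (P 1 (P 2 p))⟫ = 0 := by
      rw [hAskew, h2id (P 2 p), inner_neg_right]
      have h := kP2 (P 0 (P 1 p))
      rw [hcomm p, (hX p).2.2.2] at h
      linarith
    rw [hWp, inner_add_left, inner_sub_left, inner_add_left, g1, g2, g3, (hX p).2.2.2]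
    ring
end

section
/- Let l ≥ 2 and let u, v ∈ ℝ^l satisfy ∑_j u_j² = 1, ∑_j v_j² = 1 and ∑_j u_j v_j = 0. For real numbers θ and t, define x ∈ ℂ^l by x_j := e^{√−1 θ}(cos t · u_j + √−1 sin t · v_j). Then ∑_j |x_j|² = 1, and with P_0 x := x̄ (componentwise complex conjugation) and P_1 x := √−1 · x̄, the OT-FKM polynomial satisfies F(x) := (∑_j |x_j|²)² − 2⟨P_0 x, x⟩² − 2⟨P_1 x, x⟩² = −cos(4t), where ⟨z, w⟩ := Re(∑_j z_j \overline{w_j}) is the real Euclidean inner product on ℂ^l ≅ ℝ^{2l}. -/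
open scoped BigOperators

/-- For `l ≥ 2`, orthonormal `u, v ∈ ℝ^l`, and reals `θ, t`, the point
`x ∈ ℂ^l` with `x j = e^{√−1 θ}(cos t · u j + √−1 sin t · v j)` lies on the unit sphere,
and with `P₀ x = x̄`, `P₁ x = √−1 · x̄`, the OT-FKM polynomial satisfies
`F(x) = (∑ |x j|²)² − 2⟨P₀x, x⟩² − 2⟨P₁x, x⟩² = −cos (4t)`, where
`⟨z, w⟩ = Re (∑ j, z j · conj (w j))` is the real Euclidean inner product on `ℂ^l ≅ ℝ^{2l}`. -/
theorem stmt18 (l : ℕ) (hl : 2 ≤ l)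
    (u v : Fin l → ℝ)
    (hu : ∑ j, u j ^ 2 = 1) (hv : ∑ j, v j ^ 2 = 1) (huv : ∑ j, u j * v j = 0)
    (θ t : ℝ)
    (x : Fin l → ℂ)
    (hx : ∀ j, x j = Complex.exp (θ * Complex.I) *
      ((Real.cos t * u j : ℝ) + (Real.sin t * v j : ℝ) * Complex.I))
    (P₀x P₁x : Fin l → ℂ)
    (hP₀ : ∀ j, P₀x j = starRingEnd ℂ (x j))
    (hP₁ : ∀ j, P₁x j = Complex.I * starRingEnd ℂ (x j))
    (ip : (Fin l → ℂ) → (Fin l → ℂ) → ℝ)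
    (hip : ∀ z w, ip z w = (∑ j, z j * starRingEnd ℂ (w j)).re) :
    (∑ j, ‖x j‖ ^ 2 = 1) ∧
    ((∑ j, ‖x j‖ ^ 2) ^ 2 - 2 * ip P₀x x ^ 2 - 2 * ip P₁x x ^ 2
      = - Real.cos (4 * t)) := by
  set c := Real.cos t with hc
  set s := Real.sin t with hs
  set E := Complex.exp (θ * Complex.I) with hE
  have hEabs : ‖E‖ = 1 := by
    rw [hE, Complex.norm_exp]
    simp
  -- norm of each x j
  have habs : ∀ j, ‖x j‖ ^ 2 = c ^ 2 * u j ^ 2 + s ^ 2 * v j ^ 2 := by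
    intro j
    rw [hx j, norm_mul, hEabs, one_mul, ← Complex.normSq_eq_norm_sq]
    simp [Complex.normSq_apply]
    ring
  have hsum1 : ∑ j, ‖x j‖ ^ 2 = 1 := by
    simp only [habs]
    rw [Finset.sum_add_distrib, ← Finset.mul_sum, ← Finset.mul_sum, hu, hv]
    nlinarith [Real.sin_sq_add_cos_sq t]
  refine ⟨hsum1, ?_⟩
  -- sum of squares
  have hS : ∑ j, (x j) ^ 2 = E ^ 2 * ((c ^ 2 - s ^ 2 : ℝ) : ℂ) := by
    have key : ∀ j, (x j) ^ 2 = E ^ 2 * (((c ^ 2 * u j ^ 2 - s ^ 2 * v j ^ 2 : ℝ) : ℂ)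
        + ((2 * (c * u j) * (s * v j) : ℝ) : ℂ) * Complex.I) := by
      intro j
      rw [hx j, mul_pow]
      congr 1
      push_cast
      ring_nf
      rw [Complex.I_sq]
      ring
    simp only [key, ← Finset.mul_sum]
    congr 1
    rw [Finset.sum_add_distrib, ← Finset.sum_mul]
    have e1 : ∑ j, ((c ^ 2 * u j ^ 2 - s ^ 2 * v j ^ 2 : ℝ) : ℂ)
        = ((c ^ 2 - s ^ 2 : ℝ) : ℂ) := by
      rw [← Complex.ofReal_sum]
      congr 1
      rw [Finset.sum_sub_distrib, ← Finset.mul_sum, ← Finset.mul_sum, hu, hv]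
      ring
    have e2 : ∑ j, ((2 * (c * u j) * (s * v j) : ℝ) : ℂ) = 0 := by
      rw [← Complex.ofReal_sum]
      have : ∑ j, 2 * (c * u j) * (s * v j) = 2 * c * s * ∑ j, u j * v j := by
        rw [Finset.mul_sum]; congr 1; ext j; ring
      rw [this, huv]
      simp
    rw [e1, e2, zero_mul, add_zero]
  -- inner products
  have hip0 : ip P₀x x = (∑ j, (x j) ^ 2).re := by
    rw [hip]
    have e : ∑ j, P₀x j * starRingEnd ℂ (x j) = starRingEnd ℂ (∑ j, (x j) ^ 2) := by
      rw [map_sum]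
      refine Finset.sum_congr rfl fun j _ => ?_
      rw [hP₀ j, map_pow]; ring
    rw [e, Complex.conj_re]
  have hip1 : ip P₁x x = (∑ j, (x j) ^ 2).im := by
    rw [hip]
    have e : ∑ j, P₁x j * starRingEnd ℂ (x j)
        = Complex.I * starRingEnd ℂ (∑ j, (x j) ^ 2) := by
      rw [map_sum, Finset.mul_sum]
      refine Finset.sum_congr rfl fun j _ => ?_
      rw [hP₁ j, map_pow]; ring
    rw [e]; simp [Complex.mul_re, ← map_pow, Complex.conj_im]
  set r : ℝ := c ^ 2 - s ^ 2 with hr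
  have hre : (∑ j, (x j) ^ 2).re = (E ^ 2).re * r := by
    rw [hS]; simp [Complex.mul_re]
  have him : (∑ j, (x j) ^ 2).im = (E ^ 2).im * r := by
    rw [hS]; simp [Complex.mul_im]
  have hn : (E ^ 2).re ^ 2 + (E ^ 2).im ^ 2 = 1 := by
    have h1 : ‖E ^ 2‖ = 1 := by rw [norm_pow, hEabs]; norm_num
    have := Complex.sq_norm (E ^ 2)
    rw [h1, Complex.normSq_apply] at this
    nlinarith
  have h4 : Real.cos (4 * t) = 2 * r ^ 2 - 1 := by
    have h42 : (4 : ℝ) * t = 2 * (2 * t) := by ring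
    rw [h42, Real.cos_two_mul, Real.cos_two_mul', hr, ← hc, ← hs]
  rw [hsum1, hip0, hip1, hre, him, h4]
  nlinarith [hn]
end
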